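/- arXiv:2405.12877 — 3 statements merged into one kernel-verified Lean document; each statement's English description precedes it below -/
import Mathlib

section
/- Suppose W satisfies Assumption A. Then for every R > 0 and every σ, η ∈ (0, 1] there exist ρ ∈ (0, 1] and a compact set K_σ ⊂ Y with |Y \ K_σ| ≤ σ such that: whenever ξ, ζ ∈ Σ satisfy |ξ| ≤ R, |ζ| ≤ R and |ξ − ζ| ≤ ρ, one has sup_{y ∈ ℤ^d + K_σ} |W(y, ξ) − W(y, ζ)| ≤ η. -/
open MeasureTheory ENNReal Filter Set
open scoped Topology NNReal RealInnerProductSpace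

noncomputable section

/-- Euclidean space `ℝ^d`. -/
abbrev Esp (d : ℕ) := EuclideanSpace ℝ (Fin d)

/-- `d × d` real matrices, modeled as continuous linear maps `ℝ^d → ℝ^d`. -/
abbrev Mat (d : ℕ) := Esp d →L[ℝ] Esp d

/-- Determinant of a matrix. -/
def mdet {d : ℕ} (F : Mat d) : ℝ := LinearMap.det (F.toLinearMap)

/-- `Σ = {F : det F = 1}`, the volume preserving matrices. -/
def Sig (d : ℕ) : Set (Mat d) := {F | mdet F = 1}

/-- The cube `kY = (-k/2, k/2)^d`. -/
def cube (d : ℕ) (k : ℕ) : Set (Esp d) := {x | ∀ i, |x i| < (k : ℝ) / 2}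

/-- Membership in `W^{1,∞}_0(s)`: a Lipschitz function vanishing outside `s`. -/
def LipZero {d : ℕ} (s : Set (Esp d)) (φ : Esp d → Esp d) : Prop :=
  (∃ L : ℝ≥0, LipschitzWith L φ) ∧ ∀ x ∉ s, φ x = 0

/-- The multi-cell homogenization formula
`W_hom(F) = inf_k inf_{φ ∈ W^{1,∞}_0(kY)} ⨍_{kY} W(y, F + ∇φ(y)) dy`. -/
def Whom (d : ℕ) (W : Esp d → Mat d → ℝ≥0∞) (F : Mat d) : ℝ≥0∞ :=
  ⨅ (k : ℕ) (_ : 0 < k) (φ : Esp d → Esp d) (_ : LipZero (cube d k) φ),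
    ⨍⁻ y in cube d k, W y (F + fderiv ℝ φ y) ∂volume

/-- The standing setting on the stored energy density `W`: finite, Carathéodory on `ℝ^d × Σ`,
`Y`-periodic in the first variable, and `+∞` off `Σ`. -/
structure Setting (d : ℕ) (W : Esp d → Mat d → ℝ≥0∞) : Prop where
  finite_on : ∀ x F, F ∈ Sig d → W x F ≠ ∞
  infinite_off : ∀ x F, F ∉ Sig d → W x F = ∞
  meas : ∀ F, Measurable fun x => W x F
  cont : ∀ᵐ x : Esp d, ContinuousOn (W x) (Sig d)
  periodic : ∀ (x : Esp d) (F : Mat d) (z : Fin d → ℤ),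
    W (x + (show Esp d from WithLp.toLp 2 fun i => (z i : ℝ))) F = W x F

/-- Assumption A with constant `c ≥ 1`. -/
structure AssumptionA (d : ℕ) (W : Esp d → Mat d → ℝ≥0∞) (c : ℝ≥0) : Prop where
  hc : 1 ≤ c
  submult : ∀ᵐ x : Esp d, ∀ F G : Mat d, F ∈ Sig d → G ∈ Sig d →
    W x (F ∘L G) ≤ c * (1 + W x F) * (1 + W x G)
  lower : ∀ᵐ x : Esp d, ∀ F ∈ Sig d, (c : ℝ≥0∞)⁻¹ * (‖F‖₊ : ℝ≥0∞) - c ≤ W x F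
  upper : ∀ᵐ x : Esp d, ∀ F ∈ Sig d, W x F ≤ c * (Whom d W F + 1)
  whomFin : ∀ F ∈ Sig d, Whom d W F ≠ ∞

/-- Membership in `W^{1,1}(s)` (modeled by a.e. differentiability together with
integrability of the function and its gradient). -/
def MemW11 {d : ℕ} (s : Set (Esp d)) (u : Esp d → Esp d) : Prop :=
  IntegrableOn u s volume ∧ IntegrableOn (fderiv ℝ u) s volume ∧
    ∀ᵐ x ∂(volume.restrict s), DifferentiableAt ℝ u x

/-- Membership in `W^{1,1}_0(s)`: the extension by zero belongs to `W^{1,1}(ℝ^d)`. -/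
def MemW110 {d : ℕ} (s : Set (Esp d)) (g : Esp d → Esp d) : Prop :=
  MemW11 Set.univ g ∧ ∀ x ∉ s, g x = 0

/-- `Ω` has Lipschitz boundary: near every boundary point, `Ω` is the open epigraph of a
Lipschitz function in some direction `ν`. -/
def LipschitzBoundary {d : ℕ} (Ω : Set (Esp d)) : Prop :=
  ∀ x ∈ frontier Ω, ∃ ν : Esp d, ‖ν‖ = 1 ∧ ∃ r > (0 : ℝ), ∃ L : ℝ≥0,
    ∃ f : (Submodule.span ℝ {ν})ᗮ → ℝ, LipschitzWith L f ∧
      ∀ y ∈ Metric.ball x r,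
        (y ∈ Ω ↔ f ((Submodule.orthogonalProjectionOnto (Submodule.span ℝ {ν})ᗮ) (y - x)) < ⟪y - x, ν⟫)

/-- Absolute difference in `ℝ≥0∞`. -/
def ediff (a b : ℝ≥0∞) : ℝ≥0∞ := (a - b) ⊔ (b - a)

/-- Membership in `W^{1,p}(s)`. -/
def MemW1p {d : ℕ} (p : ℝ) (s : Set (Esp d)) (u : Esp d → Esp d) : Prop :=
  AEStronglyMeasurable u (volume.restrict s) ∧
  (∀ᵐ x ∂(volume.restrict s), DifferentiableAt ℝ u x) ∧
  (∫⁻ x in s, (‖u x‖₊ : ℝ≥0∞) ^ p ∂volume) < ∞ ∧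
  (∫⁻ x in s, (‖fderiv ℝ u x‖₊ : ℝ≥0∞) ^ p ∂volume) < ∞

/-- Membership in `W^{1,p}_0(s)`: extension by zero is in `W^{1,p}(ℝ^d)`. -/
def MemW1p0 {d : ℕ} (p : ℝ) (s : Set (Esp d)) (g : Esp d → Esp d) : Prop :=
  MemW1p p Set.univ g ∧ ∀ x ∉ s, g x = 0

/-- The truncated integrand `W_n(x,F) = min{W̃(x,F), n(|F|^p + 1)} + n |det F - 1|`. -/
def Wtrunc {d : ℕ} (Wt : Esp d → Mat d → ℝ≥0∞) (p : ℝ) (n : ℕ) (x : Esp d) (F : Mat d) :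
    ℝ≥0∞ :=
  min (Wt x F) (n * ((‖F‖₊ : ℝ≥0∞) ^ p + 1)) + n * ENNReal.ofReal |mdet F - 1|

/-- Finite-cell formula for the truncated integrand, with `W^{1,p}_0(kY)` competitors. -/
def WbarNk {d : ℕ} (Wt : Esp d → Mat d → ℝ≥0∞) (p : ℝ) (n : ℕ) (k : ℕ) (F : Mat d) : ℝ≥0∞ :=
  ⨅ (φ : Esp d → Esp d) (_ : MemW1p0 p (cube d k) φ),
    ⨍⁻ x in cube d k, Wtrunc Wt p n x (F + fderiv ℝ φ x) ∂volume

/-- Multi-cell formula `\overline{W}_n` for the truncated integrand. -/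
def WbarN {d : ℕ} (Wt : Esp d → Mat d → ℝ≥0∞) (p : ℝ) (n : ℕ) (F : Mat d) : ℝ≥0∞ :=
  ⨅ (k : ℕ) (_ : 0 < k), WbarNk Wt p n k F

/-- The lower-bound integrand `\underline{W}(F) = sup_n \overline{W}_n(F)`. -/
def Wunder {d : ℕ} (Wt : Esp d → Mat d → ℝ≥0∞) (p : ℝ) (F : Mat d) : ℝ≥0∞ :=
  ⨆ n : ℕ, WbarN Wt p n F

/-- Finite-cell formula for `W` itself with `W^{1,p}_0(kY)` competitors. -/
def Wbark {d : ℕ} (W : Esp d → Mat d → ℝ≥0∞) (p : ℝ) (k : ℕ) (F : Mat d) : ℝ≥0∞ :=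
  ⨅ (φ : Esp d → Esp d) (_ : MemW1p0 p (cube d k) φ),
    ⨍⁻ x in cube d k, W x (F + fderiv ℝ φ x) ∂volume

/-- The standing assumptions on the continuous extension `W̃` of `W`. -/
structure ExtSetting (d : ℕ) (W Wt : Esp d → Mat d → ℝ≥0∞) (c : ℝ≥0) (p : ℝ) : Prop where
  fin : ∀ x F, Wt x F ≠ ∞
  meas : ∀ F, Measurable fun x => Wt x F
  cont : ∀ᵐ x : Esp d, Continuous (Wt x)
  periodic : ∀ (x : Esp d) (F : Mat d) (z : Fin d → ℤ),
    Wt (x + (show Esp d from WithLp.toLp 2 fun i => (z i : ℝ))) F = Wt x F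
  agree : ∀ x F, F ∈ Sig d → Wt x F = W x F
  lower : ∀ᵐ x : Esp d, ∀ F : Mat d, (c : ℝ≥0∞)⁻¹ * (‖F‖₊ : ℝ≥0∞) ^ p - c ≤ Wt x F

/-- Index type for the minors of a `d × d` matrix: a size `k ≤ d` together with ordered
choices of `k` rows and `k` columns. -/
def minorIdx (d : ℕ) := Σ k : Fin (d + 1), (Fin (k : ℕ) ↪o Fin d) × (Fin (k : ℕ) ↪o Fin d)

/-- The standard basis of `ℝ^d`. -/
def stdBasis (d : ℕ) : Module.Basis (Fin d) ℝ (Esp d) := (EuclideanSpace.basisFun (Fin d) ℝ).toBasis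

/-- Matrix representation of a linear map `ℝ^d → ℝ^d`. -/
def toMat {d : ℕ} (F : Mat d) : Matrix (Fin d) (Fin d) ℝ :=
  LinearMap.toMatrix (stdBasis d) (stdBasis d) F.toLinearMap

/-- The linear map associated to a matrix. -/
def ofMat {d : ℕ} (M : Matrix (Fin d) (Fin d) ℝ) : Mat d :=
  LinearMap.toContinuousLinearMap (Matrix.toLin (stdBasis d) (stdBasis d) M)

/-- The adjugate of a matrix, as a map `ℝ^d → ℝ^d`. -/
def adjCLM {d : ℕ} (F : Mat d) : Mat d := ofMat (Matrix.adjugate (toMat F))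

/-- The vector `m(F)` of all minors of `F`. -/
def minors {d : ℕ} (F : Mat d) : minorIdx d → ℝ :=
  fun i => ((toMat F).submatrix i.2.1 i.2.2).det

/-- Polyconvexity of an `[0,∞]`-valued integrand: `f(F) = g(m(F))` with `g` convex. -/
def PolyconvexE {d : ℕ} (f : Mat d → ℝ≥0∞) : Prop :=
  ∃ g : (minorIdx d → ℝ) → ℝ≥0∞,
    (∀ (v w : minorIdx d → ℝ), ∀ t ∈ Set.Icc (0 : ℝ) 1,
      g (t • v + (1 - t) • w) ≤ ENNReal.ofReal t * g v + ENNReal.ofReal (1 - t) * g w) ∧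
    ∀ F : Mat d, f F = g (minors F)

/-- Polyconvexity of a real-valued integrand. -/
def PolyconvexR {d : ℕ} (f : Mat d → ℝ) : Prop :=
  ∃ g : (minorIdx d → ℝ) → ℝ, ConvexOn ℝ Set.univ g ∧ ∀ F : Mat d, f F = g (minors F)

/-- Polyconvex envelope: the pointwise greatest polyconvex function below `V`. -/
def polyEnv {d : ℕ} (V : Mat d → ℝ) (F : Mat d) : ℝ :=
  sSup {y | ∃ h : Mat d → ℝ, PolyconvexR h ∧ (∀ G, h G ≤ V G) ∧ y = h F}

/-- An open polyhedron: a finite intersection of open half-spaces. -/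
def IsOpenPolyhedron {d : ℕ} (s : Set (Esp d)) : Prop :=
  ∃ (n : ℕ) (a : Fin n → Esp d) (b : Fin n → ℝ), s = {x | ∀ i, ⟪a i, x⟫ < b i}


set_option maxHeartbeats 2000000 in
set_option synthInstance.maxHeartbeats 2000000 in
lemma SD_ediff_comm (a b : ℝ≥0∞) : ediff a b = ediff b a := sup_comm _ _

lemma SD_ediff_eq_ofReal_of_le {a b : ℝ≥0∞} (hb : b ≠ ∞) (h : a ≤ b) :
    ediff a b = ENNReal.ofReal |a.toReal - b.toReal| := by
  have ha : a ≠ ∞ := ne_top_of_le_ne_top hb h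
  have h1 : a.toReal ≤ b.toReal := (ENNReal.toReal_le_toReal ha hb).2 h
  rw [ediff, tsub_eq_zero_of_le h, abs_sub_comm, abs_of_nonneg (sub_nonneg.2 h1),
    ← ENNReal.toReal_sub_of_le h hb,
    ENNReal.ofReal_toReal (by simp [ENNReal.sub_ne_top hb])]
  exact bot_sup_eq _

lemma SD_ediff_eq_ofReal {a b : ℝ≥0∞} (ha : a ≠ ∞) (hb : b ≠ ∞) :
    ediff a b = ENNReal.ofReal |a.toReal - b.toReal| := by
  rcases le_total a b with h | h
  · exact SD_ediff_eq_ofReal_of_le hb h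
  · rw [SD_ediff_comm, abs_sub_comm]; exact SD_ediff_eq_ofReal_of_le ha h

lemma SD_cube_isOpen (d k : ℕ) : IsOpen (cube d k) := by
  have : cube d k = ⋂ i, {x : Esp d | |x i| < (k : ℝ) / 2} := by
    ext x; simp [cube]
  rw [this]
  exact isOpen_iInter_of_finite fun i =>
    isOpen_lt ((EuclideanSpace.proj (𝕜 := ℝ) i).continuous.abs) continuous_const

lemma SD_cube_vol_ne_top (d : ℕ) : volume (cube d 1) ≠ ∞ := by
  have hsub : cube d 1 ⊆ Metric.closedBall (0 : Esp d) (d + 1) := by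
    intro x hx
    rw [Metric.mem_closedBall, dist_zero_right, EuclideanSpace.norm_eq]
    have hsum : ∑ i, ‖x i‖ ^ 2 ≤ ((d : ℝ) + 1) ^ 2 := by
      calc ∑ i, ‖x i‖ ^ 2 ≤ ∑ _i : Fin d, (1 : ℝ) := by
            refine Finset.sum_le_sum fun i _ => ?_
            have h1 : |x i| < ((1:ℕ) : ℝ) / 2 := hx i
            have : ‖x i‖ ≤ 1 := by
              rw [Real.norm_eq_abs]; nlinarith [abs_nonneg (x i)]
            nlinarith [norm_nonneg (x i)]
        _ = (d : ℝ) := by simp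
        _ ≤ ((d : ℝ) + 1) ^ 2 := by nlinarith [Nat.cast_nonneg (α := ℝ) d]
    calc Real.sqrt (∑ i, ‖x i‖ ^ 2) ≤ Real.sqrt (((d : ℝ) + 1) ^ 2) :=
          Real.sqrt_le_sqrt hsum
      _ = (d : ℝ) + 1 := Real.sqrt_sq (by positivity)
  exact ne_top_of_le_ne_top measure_closedBall_lt_top.ne (measure_mono hsub)

set_option maxHeartbeats 2000000 in
set_option synthInstance.maxHeartbeats 2000000 in
/-- **Corollary (uniform continuity via Scorza–Dragoni).** Under Assumption A, for every
`R > 0` and `σ, η ∈ (0,1]` there are `ρ ∈ (0,1]` and a compact `K_σ ⊂ Y` with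
`|Y \ K_σ| ≤ σ` such that for all `ξ, ζ ∈ Σ` with `|ξ|, |ζ| ≤ R` and `|ξ − ζ| ≤ ρ`, one has
`|W(y,ξ) − W(y,ζ)| ≤ η` for every `y ∈ ℤ^d + K_σ`. -/
theorem scorza_dragoni_uniform_continuity (d : ℕ) (hd : 2 ≤ d)
    (W : Esp d → Mat d → ℝ≥0∞) (c : ℝ≥0) (hW : Setting d W) (hA : AssumptionA d W c) :
    ∀ R > (0:ℝ), ∀ σ ∈ Set.Ioc (0:ℝ) 1, ∀ η ∈ Set.Ioc (0:ℝ) 1,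
      ∃ ρ ∈ Set.Ioc (0:ℝ) 1, ∃ K : Set (Esp d),
        IsCompact K ∧ K ⊆ cube d 1 ∧ volume (cube d 1 \ K) ≤ ENNReal.ofReal σ ∧
        ∀ ξ ζ : Mat d, ξ ∈ Sig d → ζ ∈ Sig d → ‖ξ‖ ≤ R → ‖ζ‖ ≤ R → ‖ξ - ζ‖ ≤ ρ →
          ∀ y : Esp d,
            (∃ (z : Fin d → ℤ) (w : Esp d), w ∈ K ∧
              y = (show Esp d from WithLp.toLp 2 fun i => (z i : ℝ)) + w) →
            ediff (W y ξ) (W y ζ) ≤ ENNReal.ofReal η := by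
  classical
  intro R hR σ hσ η hη
  -- the compact set of admissible matrices
  set S : Set (Mat d) := Sig d ∩ Metric.closedBall (0 : Mat d) R with hS_def
  have hSig_closed : IsClosed (Sig d) :=
    isClosed_eq (ContinuousLinearMap.continuous_det) continuous_const
  have hS_comp : IsCompact S := (isCompact_closedBall _ _).inter_left hSig_closed
  have hS_sub : S ⊆ Sig d := inter_subset_left
  -- pair sets and countable dense subsets
  set C : ℕ → Set (Mat d × Mat d) :=
    fun k => (S ×ˢ S) ∩ {p | ‖p.1 - p.2‖ ≤ 1 / (k + 1)} with hC_def
  have hT : ∀ k : ℕ, ∃ t, t ⊆ C k ∧ t.Countable ∧ C k ⊆ closure t := fun k =>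
    (TopologicalSpace.IsSeparable.of_separableSpace (C k)).exists_countable_dense_subset
  choose T hT_sub hT_cnt hT_dense using hT
  -- the a.e. good set, made measurable
  have hbad : volume {x : Esp d | ¬ ContinuousOn (W x) (Sig d)} = 0 := by
    simpa [ae_iff] using hW.cont
  obtain ⟨N, hbadN, hNmeas, hNnull⟩ := exists_measurable_superset_of_null hbad
  have hGood : ∀ x ∉ N, ContinuousOn (W x) (Sig d) := by
    intro x hx
    by_contra h
    exact hx (hbadN h)
  -- real-valued version of W
  set v : Esp d → Mat d → ℝ := fun x F => (W x F).toReal with hv_def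
  have hv_cont : ∀ x ∉ N, ContinuousOn (v x) (Sig d) := by
    intro x hx
    exact ENNReal.continuousOn_toReal.comp (hGood x hx)
      (fun F hF => hW.finite_on x F hF)
  -- the modulus functions
  set g : ℕ → Esp d → ℝ≥0∞ :=
    fun k x => ⨆ p : T k, ediff (W x (p : Mat d × Mat d).1) (W x (p : Mat d × Mat d).2)
    with hg_def
  set h : ℕ → Esp d → ℝ := fun k x => (g k x).toReal with hh_def
  have hg_meas : ∀ k, Measurable (g k) := by
    intro k
    haveI := (hT_cnt k).to_subtype
    exact Measurable.iSup fun p =>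
      ((hW.meas _).sub (hW.meas _)).sup ((hW.meas _).sub (hW.meas _))
  have hh_meas : ∀ k, StronglyMeasurable (h k) := fun k =>
    (ENNReal.measurable_toReal.comp (hg_meas k)).stronglyMeasurable
  -- the ediff formula on pairs in C k
  have hform : ∀ x ∉ N, ∀ k, ∀ p ∈ C k,
      ediff (W x p.1) (W x p.2) = ENNReal.ofReal |v x p.1 - v x p.2| := by
    intro x hx k p hp
    exact SD_ediff_eq_ofReal (hW.finite_on x p.1 (hS_sub hp.1.1))
      (hW.finite_on x p.2 (hS_sub hp.1.2))
  -- finiteness of g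
  have hg_fin : ∀ x ∉ N, ∀ k, g k x ≠ ∞ := by
    intro x hx k
    obtain ⟨B, hB⟩ := hS_comp.exists_bound_of_continuousOn ((hv_cont x hx).mono hS_sub)
    have hle : g k x ≤ ENNReal.ofReal (B + B) := by
      refine iSup_le fun p => ?_
      have hp := hT_sub k p.2
      rw [hform x hx k _ hp]
      refine ENNReal.ofReal_le_ofReal ?_
      calc |v x (p : Mat d × Mat d).1 - v x (p : Mat d × Mat d).2|
          ≤ ‖v x (p : Mat d × Mat d).1‖ + ‖v x (p : Mat d × Mat d).2‖ := by
            rw [← Real.norm_eq_abs]; exact norm_sub_le _ _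
        _ ≤ B + B := add_le_add (hB _ hp.1.1) (hB _ hp.1.2)
    exact ne_top_of_le_ne_top ENNReal.ofReal_ne_top hle
  -- a.e. convergence of the moduli to 0
  have htend : ∀ x ∉ N, Tendsto (fun k => h k x) atTop (𝓝 0) := by
    intro x hx
    rw [Metric.tendsto_atTop]
    intro ε hε
    have huc : UniformContinuousOn (v x) S :=
      hS_comp.uniformContinuousOn_of_continuous ((hv_cont x hx).mono hS_sub)
    rw [Metric.uniformContinuousOn_iff] at huc
    obtain ⟨δ, hδ, hδ'⟩ := huc (ε / 2) (half_pos hε)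
    obtain ⟨n, hn⟩ := exists_nat_one_div_lt hδ
    refine ⟨n, fun k hk => ?_⟩
    have hgk : g k x ≤ ENNReal.ofReal (ε / 2) := by
      refine iSup_le fun p => ?_
      have hp := hT_sub k p.2
      rw [hform x hx k _ hp]
      refine ENNReal.ofReal_le_ofReal ?_
      have hdist : dist (p : Mat d × Mat d).1 (p : Mat d × Mat d).2 < δ := by
        rw [dist_eq_norm]
        calc ‖(p : Mat d × Mat d).1 - (p : Mat d × Mat d).2‖ ≤ 1 / (k + 1) := hp.2
          _ ≤ 1 / (n + 1) := by
              apply one_div_le_one_div_of_le (by positivity)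
              exact_mod_cast add_le_add_left (Nat.cast_le.2 hk) 1
          _ < δ := hn
      have := hδ' _ hp.1.1 _ hp.1.2 hdist
      rw [Real.dist_eq] at this
      exact this.le
    have hhk : h k x ≤ ε / 2 :=
      ENNReal.toReal_le_of_le_ofReal (by positivity) hgk
    have hpos : 0 ≤ h k x := ENNReal.toReal_nonneg
    rw [Real.dist_eq, sub_zero, abs_of_nonneg hpos]
    exact lt_of_le_of_lt hhk (half_lt_self hε)
  -- Egorov
  have hs_meas : MeasurableSet (cube d 1) := (SD_cube_isOpen d 1).measurableSet
  have hs_fin : volume (cube d 1) ≠ ∞ := SD_cube_vol_ne_top d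
  have hae : ∀ᵐ x : Esp d, x ∈ cube d 1 →
      Tendsto (fun k => h k x) atTop (𝓝 ((fun _ : Esp d => (0:ℝ)) x)) := by
    have : ∀ᵐ x : Esp d, x ∉ N := (measure_eq_zero_iff_ae_notMem).mp hNnull
    filter_upwards [this] with x hx _
    exact htend x hx
  obtain ⟨t, hts, htm, htμ, hunif⟩ :=
    MeasureTheory.tendstoUniformlyOn_of_ae_tendsto hh_meas stronglyMeasurable_const
      hs_meas hs_fin hae (half_pos hσ.1)
  -- choose n from uniform convergence
  obtain ⟨n, hn⟩ := (Metric.tendstoUniformlyOn_iff.mp hunif η hη.1).exists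
  -- the measurable almost-full set and its compact subset
  set A : Set (Esp d) := ((cube d 1 \ t) ∩ Nᶜ) with hA_def
  have hA_meas : MeasurableSet A := (hs_meas.diff htm).inter hNmeas.compl
  have hA_fin : volume A ≠ ∞ :=
    ne_top_of_le_ne_top hs_fin (measure_mono fun x hx => hx.1.1)
  obtain ⟨K, hKA, hK_comp, hKμ⟩ := hA_meas.exists_isCompact_diff_lt hA_fin
    (ε := ENNReal.ofReal (σ / 2)) (ENNReal.ofReal_pos.2 (half_pos hσ.1)).ne'
  refine ⟨1 / (n + 1), ⟨by positivity, by
      rw [div_le_one (by positivity)]; linarith [Nat.cast_nonneg (α := ℝ) n]⟩,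
    K, hK_comp, fun x hx => (hKA hx).1.1, ?_, ?_⟩
  · -- measure estimate
    have hsub : cube d 1 \ K ⊆ ((t ∪ N) ∪ (A \ K)) := by
      intro x hx
      by_cases hxt : x ∈ t
      · exact Or.inl (Or.inl hxt)
      by_cases hxN : x ∈ N
      · exact Or.inl (Or.inr hxN)
      · exact Or.inr ⟨⟨⟨hx.1, hxt⟩, hxN⟩, hx.2⟩
    calc volume (cube d 1 \ K) ≤ volume ((t ∪ N) ∪ (A \ K)) := measure_mono hsub
      _ ≤ volume (t ∪ N) + volume (A \ K) := measure_union_le _ _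
      _ ≤ (volume t + volume N) + volume (A \ K) :=
          add_le_add_left (measure_union_le _ _) _
      _ = volume t + volume (A \ K) := by rw [hNnull, add_zero]
      _ ≤ ENNReal.ofReal (σ / 2) + ENNReal.ofReal (σ / 2) :=
          add_le_add htμ hKμ.le
      _ = ENNReal.ofReal σ := by
          rw [← ENNReal.ofReal_add (half_pos hσ.1).le (half_pos hσ.1).le, add_halves]
  · -- the uniform continuity estimate
    intro ξ ζ hξ hζ hξR hζR hρ y hy
    obtain ⟨z, w, hwK, hy⟩ := hy
    have hwA : w ∈ A := hKA hwK
    have hwN : w ∉ N := hwA.2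
    have hwst : w ∈ cube d 1 \ t := hwA.1
    -- translate by periodicity
    have hWy : ∀ F, W y F = W w F := by
      intro F
      rw [hy, add_comm]
      exact hW.periodic w F z
    have hfinξ := hW.finite_on w ξ hξ
    have hfinζ := hW.finite_on w ζ hζ
    rw [hWy ξ, hWy ζ, SD_ediff_eq_ofReal hfinξ hfinζ]
    refine ENNReal.ofReal_le_ofReal ?_
    -- the pair (ξ, ζ) lies in C n
    have hξS : ξ ∈ S := ⟨hξ, by rwa [Metric.mem_closedBall, dist_zero_right]⟩
    have hζS : ζ ∈ S := ⟨hζ, by rwa [Metric.mem_closedBall, dist_zero_right]⟩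
    have hpair : (ξ, ζ) ∈ C n := ⟨⟨hξS, hζS⟩, by simpa using hρ⟩
    have hclosure : (ξ, ζ) ∈ closure (T n) := hT_dense n hpair
    -- the continuous modulus on pairs
    set Φ : Mat d × Mat d → ℝ := fun p => |v w p.1 - v w p.2| with hΦ_def
    have hΦcont : ContinuousOn Φ (Sig d ×ˢ Sig d) := by
      refine ContinuousOn.abs (ContinuousOn.sub ?_ ?_)
      · exact (hv_cont w hwN).comp continuousOn_fst (fun p hp => hp.1)
      · exact (hv_cont w hwN).comp continuousOn_snd (fun p hp => hp.2)
    -- bound on the dense subset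
    have hbound : ∀ p ∈ T n, Φ p ≤ h n w := by
      intro p hp
      have hpC := hT_sub n hp
      have h1 : ENNReal.ofReal (Φ p) ≤ g n w := by
        rw [← hform w hwN n p hpC]
        exact le_iSup (fun q : T n => ediff (W w (q : Mat d × Mat d).1)
          (W w (q : Mat d × Mat d).2)) ⟨p, hp⟩
      calc Φ p = (ENNReal.ofReal (Φ p)).toReal :=
            (ENNReal.toReal_ofReal (abs_nonneg _)).symm
        _ ≤ (g n w).toReal := ENNReal.toReal_mono (hg_fin w hwN n) h1
    -- pass to the limit
    have hneBot : (𝓝[T n] (ξ, ζ)).NeBot := mem_closure_iff_nhdsWithin_neBot.mp hclosure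
    have htendΦ : Tendsto Φ (𝓝[T n] (ξ, ζ)) (𝓝 (Φ (ξ, ζ))) :=
      (hΦcont.continuousWithinAt (mem_prod.2 ⟨hξ, hζ⟩)).mono
        ((hT_sub n).trans fun p hp => ⟨hp.1.1.1, hp.1.2.1⟩)
    have hΦle : Φ (ξ, ζ) ≤ h n w :=
      le_of_tendsto htendΦ (eventually_mem_nhdsWithin.mono hbound)
    have hpos : (0:ℝ) ≤ h n w := ENNReal.toReal_nonneg
    have hnw := hn w hwst
    simp only [Real.dist_eq, zero_sub, abs_neg] at hnw
    rw [abs_of_nonneg hpos] at hnw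
    exact hΦle.trans hnw.le

end
end

section
/- Suppose W satisfies Assumption A and the additional p-growth lower bound, and assume in addition that W(x, ·) is polyconvex for a.e. x ∈ ℝ^d and that the extension W̃(x, ·) is polyconvex for a.e. x. Then truncation and homogenization commute on the finite-cell formulas: for every k ∈ ℕ and every F ∈ ℝ^{d×d}, sup_{n ∈ ℕ} \overline{W}_n^{(k)}(F) = \overline{W}^{(k)}(F), where \overline{W}_n^{(k)}(F) = inf_{φ ∈ W^{1,p}_0(kY)^d} ⨍_{kY} W_n(x, F + ∇φ(x)) dx and \overline{W}^{(k)}(F) = inf_{φ ∈ W^{1,p}_0(kY)^d} ⨍_{kY} W(x, F + ∇φ(x)) dx. -/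
open MeasureTheory ENNReal Filter Set
open scoped Topology NNReal RealInnerProductSpace

set_option maxHeartbeats 1000000
set_option synthInstance.maxHeartbeats 400000

noncomputable section

/-! ### Auxiliary material for the proof -/

lemma THC_mdet_one {d : ℕ} : mdet (1 : Mat d) = 1 := by
  unfold mdet
  rw [show ((1 : Mat d).toLinearMap) = LinearMap.id from rfl]
  exact LinearMap.det_id

lemma THC_one_mem_Sig {d : ℕ} : (1 : Mat d) ∈ Sig d := THC_mdet_one

lemma THC_continuous_mdet {d : ℕ} : Continuous fun G : Mat d => mdet G :=
  ContinuousLinearMap.continuous_det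

lemma THC_coord_continuous {d : ℕ} (i : Fin d) : Continuous fun x : Esp d => x i :=
  (EuclideanSpace.proj (𝕜 := ℝ) i).continuous

lemma THC_coord_isLinear {d : ℕ} (i : Fin d) : IsLinearMap ℝ fun x : Esp d => x i :=
  ⟨fun a b => rfl, fun t a => rfl⟩

lemma THC_isOpen_cube {d k : ℕ} : IsOpen (cube d k) := by
  have : cube d k = ⋂ i, (fun x : Esp d => |x i|) ⁻¹' Iio ((k : ℝ)/2) := by
    ext x; simp [cube]
  rw [this]
  exact isOpen_iInter_of_finite fun i =>
    ((continuous_abs.comp (THC_coord_continuous i)).isOpen_preimage _ isOpen_Iio)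

lemma THC_convex_cube {d k : ℕ} : Convex ℝ (cube d k) := by
  have : cube d k = ⋂ i, ({x : Esp d | x i < (k:ℝ)/2} ∩ {x : Esp d | -((k:ℝ)/2) < x i}) := by
    ext x
    simp only [cube, mem_setOf_eq, mem_iInter, mem_inter_iff]
    exact forall_congr' fun i => by rw [abs_lt]; tauto
  rw [this]
  refine convex_iInter fun i => Convex.inter ?_ ?_
  · exact convex_halfSpace_lt (THC_coord_isLinear i) _
  · exact convex_halfSpace_gt (THC_coord_isLinear i) _

lemma THC_cube_subset_closedBall {d k : ℕ} :
    cube d k ⊆ Metric.closedBall (0 : Esp d) ((d + 1 : ℕ) * (k + 1 : ℕ)) := by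
  intro x hx
  rw [Metric.mem_closedBall, dist_zero_right, EuclideanSpace.norm_eq]
  have hb : ∀ i, ‖x i‖ ^ 2 ≤ ((k:ℝ)+1)^2 := by
    intro i
    have h0 := hx i
    have h1 : |x i| ≤ (k:ℝ) + 1 := by
      have : (0:ℝ) ≤ (k:ℝ) := Nat.cast_nonneg k
      linarith
    calc ‖x i‖ ^ 2 = |x i| ^ 2 := by rw [Real.norm_eq_abs]
    _ ≤ ((k:ℝ)+1)^2 := by
        apply pow_le_pow_left₀ (abs_nonneg _) h1
  have hsum : (∑ i, ‖x i‖ ^ 2) ≤ (d : ℝ) * ((k:ℝ)+1)^2 := by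
    calc (∑ i : Fin d, ‖x i‖ ^ 2) ≤ ∑ _i : Fin d, ((k:ℝ)+1)^2 := Finset.sum_le_sum fun i _ => hb i
    _ = (d : ℝ) * ((k:ℝ)+1)^2 := by simp [mul_comm]
  calc Real.sqrt (∑ i, ‖x i‖ ^ 2) ≤ Real.sqrt ((d:ℝ) * ((k:ℝ)+1)^2) := Real.sqrt_le_sqrt hsum
  _ ≤ Real.sqrt ((((d:ℕ):ℝ)+1)^2 * ((k:ℝ)+1)^2) := by
      apply Real.sqrt_le_sqrt
      have h2 : (0:ℝ) ≤ (d:ℝ) := Nat.cast_nonneg d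
      nlinarith [mul_nonneg (by positivity : (0:ℝ) ≤ (d:ℝ)^2 + (d:ℝ) + 1) (sq_nonneg ((k:ℝ)+1))]
  _ = (((d:ℝ))+1) * (((k:ℝ))+1) := by
      rw [← mul_pow, Real.sqrt_sq (by positivity)]
  _ = ((d + 1 : ℕ) : ℝ) * ((k + 1 : ℕ) : ℝ) := by push_cast; ring

lemma THC_isBounded_cube {d k : ℕ} : Bornology.IsBounded (cube d k) :=
  (Metric.isBounded_closedBall).subset THC_cube_subset_closedBall

lemma THC_cube_measure_pos {d k : ℕ} (hk : 0 < k) : 0 < volume (cube d k) := by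
  refine THC_isOpen_cube.measure_pos volume ⟨0, fun i => ?_⟩
  have : |(0 : Esp d) i| = 0 := by norm_num [PiLp.zero_apply]
  rw [this]
  have : (0:ℝ) < (k:ℝ) := by exact_mod_cast hk
  linarith

lemma THC_cube_measure_lt_top {d k : ℕ} : volume (cube d k) < ∞ :=
  THC_isBounded_cube.measure_lt_top

lemma THC_closure_cube_measure_lt_top {d k : ℕ} : volume (closure (cube d k)) < ∞ :=
  THC_isBounded_cube.closure.measure_lt_top

lemma THC_frontier_cube_null {d k : ℕ} : volume (frontier (cube d k)) = 0 :=
  THC_convex_cube.addHaar_frontier _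

section THCAux
open TopologicalSpace

variable {d : ℕ}

lemma THC_wtrunc_mono (Wt : Esp d → Mat d → ℝ≥0∞) (p : ℝ) (x : Esp d) (G : Mat d) :
    Monotone fun n : ℕ => Wtrunc Wt p n x G := by
  intro m n hmn
  have hc : ((m:ℕ) : ℝ≥0∞) ≤ ((n:ℕ) : ℝ≥0∞) := by exact_mod_cast hmn
  unfold Wtrunc
  exact add_le_add (min_le_min le_rfl (mul_le_mul' hc le_rfl)) (mul_le_mul' hc le_rfl)

lemma THC_wtrunc_le {W Wt : Esp d → Mat d → ℝ≥0∞} {p : ℝ} (n : ℕ)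
    (hagree : ∀ x F, F ∈ Sig d → Wt x F = W x F)
    (hoff : ∀ x F, F ∉ Sig d → W x F = ∞) (x : Esp d) (G : Mat d) :
    Wtrunc Wt p n x G ≤ W x G := by
  by_cases hG : G ∈ Sig d
  · have hdet : mdet G = 1 := hG
    unfold Wtrunc
    rw [hdet]
    simp only [sub_self, abs_zero, ENNReal.ofReal_zero, mul_zero, add_zero]
    exact (min_le_left _ _).trans_eq (hagree x G hG)
  · rw [hoff x G hG]; exact le_top

lemma THC_le_iSup_wtrunc (Wt : Esp d → Mat d → ℝ≥0∞) {p : ℝ} (x : Esp d) (G : Mat d)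
    (hdet : mdet G = 1) (hfin : Wt x G ≠ ∞) :
    Wt x G ≤ ⨆ n : ℕ, Wtrunc Wt p n x G := by
  obtain ⟨m, hm⟩ := ENNReal.exists_nat_gt hfin
  refine le_trans ?_ (le_iSup (fun n => Wtrunc Wt p n x G) m)
  unfold Wtrunc
  rw [hdet]
  simp only [sub_self, abs_zero, ENNReal.ofReal_zero, mul_zero, add_zero]
  exact le_min le_rfl (hm.le.trans (le_mul_of_one_le_right (by simp) le_add_self))

lemma THC_wtrunc_continuous (Wt : Esp d → Mat d → ℝ≥0∞) {p : ℝ} {x : Esp d}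
    (h : Continuous (Wt x)) (n : ℕ) : Continuous (Wtrunc Wt p n x) := by
  have h1 : Continuous fun G : Mat d => (‖G‖₊ : ℝ≥0∞) ^ p :=
    ENNReal.continuous_rpow_const.comp (ENNReal.continuous_coe.comp continuous_nnnorm)
  have h2 : Continuous fun G : Mat d => (n : ℝ≥0∞) * ((‖G‖₊ : ℝ≥0∞) ^ p + 1) :=
    (ENNReal.continuous_const_mul (by simp)).comp (h1.add continuous_const)
  have h3 : Continuous fun G : Mat d => (n : ℝ≥0∞) * ENNReal.ofReal |mdet G - 1| :=
    (ENNReal.continuous_const_mul (by simp)).comp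
      (ENNReal.continuous_ofReal.comp (continuous_abs.comp (THC_continuous_mdet.sub continuous_const)))
  exact (h.min h2).add h3

lemma THC_iInf_le_of_denseRange {α : Type*} [TopologicalSpace α] {u : ℕ → α}
    (hu : DenseRange u) {f : α → ℝ≥0∞} (hf : Continuous f) (a : α) :
    ⨅ i, f (u i) ≤ f a := by
  by_contra hcon
  push_neg at hcon
  obtain ⟨i, hi⟩ := hu.exists_mem_open (hf.isOpen_preimage _ isOpen_Iio) ⟨a, hcon⟩
  exact absurd hi (not_lt.2 (iInf_le (fun i => f (u i)) i))

/-- A dense sequence in the space of matrices. -/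
def THC_D (d : ℕ) : ℕ → Mat d := denseSeq (Mat d)

lemma THC_D_dense (d : ℕ) : DenseRange (THC_D d) := denseRange_denseSeq _

instance THC_nonempty_Sig : Nonempty ↥(Sig d) := ⟨⟨1, THC_one_mem_Sig⟩⟩

/-- A sequence in `Σ` which is dense in `Σ`. -/
def THC_E (d : ℕ) : ℕ → Mat d := fun i => (denseSeq ↥(Sig d) i : Mat d)

lemma THC_E_mem (d : ℕ) (i : ℕ) : THC_E d i ∈ Sig d := (denseSeq ↥(Sig d) i).2

lemma THC_iInf_E_le {f : Mat d → ℝ≥0∞} (hf : ContinuousOn f (Sig d)) {G : Mat d}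
    (hG : G ∈ Sig d) : ⨅ i, f (THC_E d i) ≤ f G := by
  have : ⨅ i, (f ∘ (Subtype.val : ↥(Sig d) → Mat d)) (denseSeq ↥(Sig d) i) ≤
      (f ∘ (Subtype.val : ↥(Sig d) → Mat d)) ⟨G, hG⟩ :=
    THC_iInf_le_of_denseRange (denseRange_denseSeq _)
      (ContinuousOn.comp_continuous hf continuous_subtype_val (fun y => y.2)) ⟨G, hG⟩
  exact this

/-- Pointwise lower envelope of the truncated functionals. -/
def THC_hN (d : ℕ) (Wt : Esp d → Mat d → ℝ≥0∞) (p : ℝ) (n : ℕ) (x : Esp d) : ℝ≥0∞ :=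
  ⨅ i, Wtrunc Wt p n x (THC_D d i)

/-- Its supremum over the truncation level. -/
def THC_g (d : ℕ) (Wt : Esp d → Mat d → ℝ≥0∞) (p : ℝ) (x : Esp d) : ℝ≥0∞ :=
  ⨆ n, THC_hN d Wt p n x

lemma THC_hN_measurable (Wt : Esp d → Mat d → ℝ≥0∞) (p : ℝ) (n : ℕ)
    (hmeas : ∀ F, Measurable fun x => Wt x F) : Measurable (THC_hN d Wt p n) := by
  refine Measurable.iInf fun i => ?_
  exact ((hmeas _).min measurable_const).add measurable_const

lemma THC_g_measurable (Wt : Esp d → Mat d → ℝ≥0∞) (p : ℝ)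
    (hmeas : ∀ F, Measurable fun x => Wt x F) : Measurable (THC_g d Wt p) :=
  Measurable.iSup fun n => THC_hN_measurable Wt p n hmeas

lemma THC_hN_mono (Wt : Esp d → Mat d → ℝ≥0∞) (p : ℝ) (x : Esp d) :
    Monotone fun n => THC_hN d Wt p n x :=
  fun m n h => iInf_mono fun i => THC_wtrunc_mono Wt p x _ h

lemma THC_hN_le (Wt : Esp d → Mat d → ℝ≥0∞) (p : ℝ) (n : ℕ) {x : Esp d}
    (hcont : Continuous (Wt x)) (G : Mat d) :
    THC_hN d Wt p n x ≤ Wtrunc Wt p n x G :=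
  THC_iInf_le_of_denseRange (THC_D_dense d) (THC_wtrunc_continuous Wt hcont n) G

/-- Pointwise compactness/minimax: at a good point `x`, if `sup_n inf_G Wtrunc_n < ∞`, there
is a volume-preserving matrix realizing the value. -/
lemma THC_exists_min {d : ℕ} (Wt : Esp d → Mat d → ℝ≥0∞) {p : ℝ} (hp : 1 ≤ p) {c : ℝ≥0}
    (hc : 1 ≤ c) {x : Esp d} (hcont : Continuous (Wt x))
    (hlow : ∀ G : Mat d, (c : ℝ≥0∞)⁻¹ * (‖G‖₊ : ℝ≥0∞) ^ p - c ≤ Wt x G)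
    (hfin : ∀ G, Wt x G ≠ ∞)
    (hgfin : THC_g d Wt p x ≠ ∞) :
    ∃ G ∈ Sig d, Wt x G ≤ THC_g d Wt p x := by
  set g0 := THC_g d Wt p x with hg0
  have hp0 : (0:ℝ) < p := lt_of_lt_of_le one_pos hp
  have hsel : ∀ n : ℕ, ∃ G : Mat d, Wtrunc Wt p n x G < g0 + ((n:ℝ≥0∞)+1)⁻¹ := by
    intro n
    have h0 : THC_hN d Wt p n x ≤ g0 := le_iSup (fun n => THC_hN d Wt p n x) n
    have h1 : THC_hN d Wt p n x < g0 + ((n:ℝ≥0∞)+1)⁻¹ :=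
      lt_of_le_of_lt h0 (ENNReal.lt_add_right hgfin (ENNReal.inv_ne_zero.2 (by simp)))
    obtain ⟨i, hi⟩ := iInf_lt_iff.mp h1
    exact ⟨THC_D d i, hi⟩
  choose G hG using hsel
  set T : ℝ≥0∞ := g0 + 1 with hT
  have hTne : T ≠ ∞ := ENNReal.add_ne_top.2 ⟨hgfin, one_ne_top⟩
  have hWle : ∀ n : ℕ, Wtrunc Wt p n x (G n) ≤ T := by
    intro n
    refine (hG n).le.trans (add_le_add le_rfl ?_)
    exact ENNReal.inv_le_one.2 le_add_self
  obtain ⟨n₀, hn₀⟩ := ENNReal.exists_nat_gt (coe_ne_top (r := c))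
  have hn₀1 : 1 ≤ (n₀ : ℝ≥0∞) := le_trans (by exact_mod_cast hc) hn₀.le
  set Rp : ℝ≥0∞ := c * (T + c) with hRp
  have hRpne : Rp ≠ ∞ := ENNReal.mul_ne_top coe_ne_top (ENNReal.add_ne_top.2 ⟨hTne, coe_ne_top⟩)
  have hnormp : ∀ n : ℕ, (‖G (n + n₀)‖₊ : ℝ≥0∞) ^ p ≤ Rp := by
    intro n
    set m := n + n₀ with hm
    have hm1 : 1 ≤ (m : ℝ≥0∞) := le_trans hn₀1 (by exact_mod_cast Nat.le_add_left n₀ n)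
    have hmin : min (Wt x (G m)) ((m:ℝ≥0∞) * ((‖G m‖₊ : ℝ≥0∞) ^ p + 1)) ≤ T :=
      le_trans le_self_add (hWle m)
    have hlow2 : (c : ℝ≥0∞)⁻¹ * (‖G m‖₊ : ℝ≥0∞) ^ p - c ≤
        min (Wt x (G m)) ((m:ℝ≥0∞) * ((‖G m‖₊ : ℝ≥0∞) ^ p + 1)) := by
      refine le_min (hlow (G m)) (le_trans tsub_le_self ?_)
      calc (c : ℝ≥0∞)⁻¹ * (‖G m‖₊ : ℝ≥0∞) ^ p ≤ 1 * (‖G m‖₊ : ℝ≥0∞) ^ p := by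
            gcongr
            exact ENNReal.inv_le_one.2 (by exact_mod_cast hc)
      _ = (‖G m‖₊ : ℝ≥0∞) ^ p := one_mul _
      _ ≤ (‖G m‖₊ : ℝ≥0∞) ^ p + 1 := le_self_add
      _ = 1 * ((‖G m‖₊ : ℝ≥0∞) ^ p + 1) := (one_mul _).symm
      _ ≤ (m:ℝ≥0∞) * ((‖G m‖₊ : ℝ≥0∞) ^ p + 1) := by gcongr
    have h3 : (c : ℝ≥0∞)⁻¹ * (‖G m‖₊ : ℝ≥0∞) ^ p ≤ T + c := tsub_le_iff_right.mp (hlow2.trans hmin)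
    calc (‖G m‖₊ : ℝ≥0∞) ^ p = (c * (c : ℝ≥0∞)⁻¹) * (‖G m‖₊ : ℝ≥0∞) ^ p := by
          rw [ENNReal.mul_inv_cancel (by exact_mod_cast (lt_of_lt_of_le one_pos hc).ne') coe_ne_top,
            one_mul]
    _ = c * ((c : ℝ≥0∞)⁻¹ * (‖G m‖₊ : ℝ≥0∞) ^ p) := by rw [mul_assoc]
    _ ≤ c * (T + c) := by gcongr
  set Rr : ℝ := (Rp ^ (1/p)).toReal with hRrdef
  have hnorm : ∀ n : ℕ, G (n + n₀) ∈ Metric.closedBall (0 : Mat d) Rr := by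
    intro n
    rw [mem_closedBall_zero_iff]
    have h1 : ((‖G (n + n₀)‖₊ : ℝ≥0∞) ^ p) ^ (1/p) ≤ Rp ^ (1/p) :=
      ENNReal.rpow_le_rpow (hnormp n) (by positivity)
    rw [← ENNReal.rpow_mul, mul_one_div, div_self hp0.ne', ENNReal.rpow_one] at h1
    have h2 := ENNReal.toReal_mono (ENNReal.rpow_ne_top_of_nonneg (by positivity) hRpne) h1
    simpa [hRrdef, one_div] using h2
  obtain ⟨Gs, _, ψ, hψ, hconv⟩ := tendsto_subseq_of_bounded
    (Metric.isBounded_closedBall (x := (0 : Mat d)) (r := Rr)) hnorm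
  have hdet_bound : ∀ n : ℕ, |mdet (G (n + n₀)) - 1| ≤ T.toReal / ((n + n₀ : ℕ) : ℝ) := by
    intro n
    set m := n + n₀ with hm
    have hm1 : 1 ≤ (m : ℝ≥0∞) := le_trans hn₀1 (by exact_mod_cast Nat.le_add_left n₀ n)
    have hm0 : (m : ℝ≥0∞) ≠ 0 := (lt_of_lt_of_le zero_lt_one hm1).ne'
    have h1 : (m:ℝ≥0∞) * ENNReal.ofReal |mdet (G m) - 1| ≤ T := le_trans le_add_self (hWle m)
    have h2 : ENNReal.ofReal |mdet (G m) - 1| ≤ T / (m:ℝ≥0∞) :=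
      (ENNReal.le_div_iff_mul_le (Or.inl hm0) (Or.inl (natCast_ne_top m))).mpr
        (by rwa [mul_comm])
    have h3 := ENNReal.toReal_mono (ENNReal.div_lt_top hTne hm0).ne h2
    rw [ENNReal.toReal_ofReal (abs_nonneg _), ENNReal.toReal_div] at h3
    simpa using h3
  have hdet1 : Tendsto (fun j => mdet (G (ψ j + n₀))) atTop (𝓝 1) := by
    rw [tendsto_iff_dist_tendsto_zero]
    refine squeeze_zero (g := fun j => T.toReal / ((ψ j + n₀ : ℕ) : ℝ)) (fun j => dist_nonneg) (fun j => ?_) ?_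
    · rw [Real.dist_eq]
      exact hdet_bound (ψ j)
    · have h1 : Tendsto (fun n : ℕ => T.toReal / (n:ℝ)) atTop (𝓝 0) :=
        tendsto_const_div_atTop_nhds_zero_nat _
      have h2 : Tendsto (fun j : ℕ => ψ j + n₀) atTop atTop :=
        tendsto_atTop_mono (fun j => (hψ.le_apply).trans (Nat.le_add_right _ _)) tendsto_id
      exact h1.comp h2
  have hdet2 : Tendsto (fun j => mdet (G (ψ j + n₀))) atTop (𝓝 (mdet Gs)) :=
    (THC_continuous_mdet.tendsto Gs).comp hconv
  have hdetGs : Gs ∈ Sig d := tendsto_nhds_unique hdet2 hdet1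
  have key : ∀ m : ℕ, Wtrunc Wt p m x Gs ≤ g0 := by
    intro m
    refine ENNReal.le_of_forall_pos_le_add fun ε hε _ => ?_
    obtain ⟨Mδ, hMδ⟩ := ENNReal.exists_nat_gt (ENNReal.inv_ne_top.2 (ENNReal.coe_ne_zero.2 hε.ne'))
    have hlim : Tendsto (fun j => Wtrunc Wt p m x (G (ψ j + n₀))) atTop
        (𝓝 (Wtrunc Wt p m x Gs)) :=
      ((THC_wtrunc_continuous Wt hcont m).tendsto Gs).comp hconv
    refine le_of_tendsto hlim ?_
    filter_upwards [eventually_ge_atTop (max m Mδ)] with j hj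
    have hψj : max m Mδ ≤ ψ j + n₀ := le_trans (hj.trans hψ.le_apply) (Nat.le_add_right _ _)
    calc Wtrunc Wt p m x (G (ψ j + n₀)) ≤ Wtrunc Wt p (ψ j + n₀) x (G (ψ j + n₀)) :=
          THC_wtrunc_mono Wt p x _ (le_trans (le_max_left _ _) hψj)
    _ ≤ g0 + (((ψ j + n₀ : ℕ) : ℝ≥0∞) + 1)⁻¹ := (hG _).le
    _ ≤ g0 + ε := by
        gcongr
        have hMle : (Mδ : ℝ≥0∞) ≤ ((ψ j + n₀ : ℕ) : ℝ≥0∞) + 1 := by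
          have h4 : (Mδ:ℕ) ≤ ψ j + n₀ := le_trans (le_max_right _ _) hψj
          exact_mod_cast Nat.le_succ_of_le h4
        calc (((ψ j + n₀ : ℕ) : ℝ≥0∞) + 1)⁻¹ ≤ (Mδ:ℝ≥0∞)⁻¹ := ENNReal.inv_le_inv' hMle
        _ ≤ ε := by
            rw [← inv_inv (ε : ℝ≥0∞)]
            exact ENNReal.inv_le_inv' hMδ.le
  exact ⟨Gs, hdetGs, le_trans (THC_le_iSup_wtrunc Wt x Gs hdetGs (hfin Gs)) (iSup_le key)⟩

lemma THC_frontier_biUnion {α β : Type*} [TopologicalSpace α] (t : Finset β) (s : β → Set α) :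
    frontier (⋃ i ∈ t, s i) ⊆ ⋃ i ∈ t, frontier (s i) := by
  classical
  induction t using Finset.induction_on with
  | empty => simp
  | @insert a t _ ih =>
      rw [Finset.set_biUnion_insert, Finset.set_biUnion_insert]
      exact (frontier_union_subset _ _).trans (union_subset_union inter_subset_left (inter_subset_right.trans ih))

lemma THC_ball_refine {d : ℕ} {K U : Set (Esp d)} (hK : IsCompact K) (hU : IsOpen U)
    (hKU : K ⊆ U) : ∃ V : Set (Esp d), IsOpen V ∧ K ⊆ V ∧ V ⊆ U ∧ volume (frontier V) = 0 := by
  classical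
  have hr : ∀ x ∈ K, ∃ r, r > 0 ∧ Metric.ball x r ⊆ U := by
    intro x hx
    obtain ⟨r, hr0, hrU⟩ := Metric.isOpen_iff.mp hU x (hKU hx)
    exact ⟨r, hr0, hrU⟩
  choose! r hr0 hrU using hr
  have hcover : K ⊆ ⋃ x ∈ K, Metric.ball x (r x) := fun x hx =>
    mem_biUnion hx (Metric.mem_ball_self (hr0 x hx))
  obtain ⟨b, hbK, hbfin, hbcover⟩ :=
    hK.elim_finite_subcover_image (fun x _ => Metric.isOpen_ball) hcover
  refine ⟨⋃ x ∈ hbfin.toFinset, Metric.ball x (r x), ?_, ?_, ?_, ?_⟩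
  · exact isOpen_biUnion fun x _ => Metric.isOpen_ball
  · refine hbcover.trans ?_
    refine iUnion₂_subset fun x hx => ?_
    exact subset_biUnion_of_mem (u := fun x => Metric.ball x (r x)) (hbfin.mem_toFinset.mpr hx)
  · refine iUnion₂_subset fun x hx => ?_
    exact hrU x (hbK (hbfin.mem_toFinset.mp hx))
  · refine measure_mono_null (THC_frontier_biUnion _ _) ?_
    refine (measure_biUnion_null_iff (hbfin.toFinset.countable_toSet)).mpr fun x _ => ?_
    exact (convex_ball x (r x)).addHaar_frontier _

lemma THC_sep {d : ℕ} (N : ℕ) (K : ℕ → Set (Esp d)) (hcomp : ∀ j, IsCompact (K j))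
    (hdisj : ∀ i j, i ≠ j → Disjoint (K i) (K j)) :
    ∃ δ : ℝ, 0 < δ ∧ ∀ i ≤ N, ∀ j ≤ N, i ≠ j →
      Disjoint (Metric.thickening δ (K i)) (Metric.thickening δ (K j)) := by
  classical
  have hpair : ∀ q : ℕ × ℕ, ∃ δ, 0 < δ ∧ (q.1 ≠ q.2 →
      Disjoint (Metric.thickening δ (K q.1)) (Metric.thickening δ (K q.2))) := by
    intro q
    by_cases h : q.1 = q.2
    · exact ⟨1, one_pos, fun hq => absurd h hq⟩
    · obtain ⟨δ, hδ, hd⟩ := (hdisj q.1 q.2 h).exists_thickenings (hcomp _) (hcomp _).isClosed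
      exact ⟨δ, hδ, fun _ => hd⟩
  choose pd hpd0 hpd using hpair
  have hSne : ((Finset.range (N+1)) ×ˢ (Finset.range (N+1))).Nonempty :=
    ⟨(0,0), by simp⟩
  refine ⟨min 1 (((Finset.range (N+1)) ×ˢ (Finset.range (N+1))).inf' hSne pd), ?_, ?_⟩
  · exact lt_min one_pos ((Finset.lt_inf'_iff _).mpr fun q _ => hpd0 q)
  · intro i hi j hj hij
    have hmem : (i,j) ∈ (Finset.range (N+1)) ×ˢ (Finset.range (N+1)) := by
      simp [Finset.mem_product, Nat.lt_succ_iff, hi, hj]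
    have hle : min 1 (((Finset.range (N+1)) ×ˢ (Finset.range (N+1))).inf' hSne pd) ≤ pd (i,j) :=
      (min_le_right _ _).trans (Finset.inf'_le _ hmem)
    exact (hpd (i,j) hij).mono (Metric.thickening_mono hle _) (Metric.thickening_mono hle _)

/-- Construction of a piecewise affine (off a null set) competitor in `W^{1,p}_0`. -/
lemma THC_construct {d k : ℕ} {p : ℝ} (hp : 1 ≤ p) (F : Mat d) (N : ℕ)
    (V : ℕ → Set (Esp d)) (A : ℕ → Mat d) (A₀ : Mat d)
    (hVo : ∀ j, IsOpen (V j)) (hVs : ∀ j, V j ⊆ cube d k)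
    (hVd : ∀ i j, i ≠ j → Disjoint (V i) (V j))
    (hVf : ∀ j, volume (frontier (V j)) = 0) :
    ∃ φ : Esp d → Esp d, MemW1p0 p (cube d k) φ ∧
      (∀ j ≤ N, ∀ x ∈ V j, F + fderiv ℝ φ x = A j) ∧
      (∀ x ∈ cube d k \ ⋃ j ∈ Finset.range (N+1), closure (V j), F + fderiv ℝ φ x = A₀) := by
  classical
  have hp0 : (0:ℝ) < p := lt_of_lt_of_le one_pos hp
  set S := Finset.range (N+1) with hS
  set O : Set (Esp d) := cube d k \ ⋃ j ∈ S, closure (V j) with hOdef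
  have hOopen : IsOpen O :=
    THC_isOpen_cube.sdiff (isClosed_biUnion_finset fun j _ => isClosed_closure)
  have hOsub : O ⊆ cube d k := diff_subset
  have hOV : ∀ j ∈ S, Disjoint O (V j) := fun j hj =>
    disjoint_left.mpr fun x hx hxV => hx.2 (mem_biUnion hj (subset_closure hxV))
  set φ : Esp d → Esp d := fun x =>
    (∑ j ∈ S, (V j).indicator (fun y => (A j - F) y) x) +
      O.indicator (fun y => (A₀ - F) y) x with hφdef
  have hφV : ∀ j ∈ S, Set.EqOn φ (fun y => (A j - F) y) (V j) := by
    intro j hj x hx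
    have h1 : ∀ i ∈ S, (V i).indicator (fun y => (A i - F) y) x
        = if i = j then (A j - F) x else 0 := by
      intro i _
      by_cases hij : i = j
      · subst hij; simp [Set.indicator_of_mem hx]
      · have hxi : x ∉ V i := fun hxi => (hVd i j hij).le_bot ⟨hxi, hx⟩
        simp [Set.indicator_of_notMem hxi, hij]
    have h2 : x ∉ O := fun hxO => (hOV j hj).le_bot ⟨hxO, hx⟩
    simp only [hφdef, Finset.sum_congr rfl h1, Set.indicator_of_notMem h2, add_zero]
    rw [Finset.sum_ite_eq' S j (fun _ => (A j - F) x), if_pos hj]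
  have hφO : Set.EqOn φ (fun y => (A₀ - F) y) O := by
    intro x hx
    have h1 : ∀ i ∈ S, (V i).indicator (fun y => (A i - F) y) x = 0 := fun i hi =>
      Set.indicator_of_notMem (fun hxV => (hOV i hi).le_bot ⟨hx, hxV⟩) _
    simp only [hφdef, Finset.sum_congr rfl h1, Finset.sum_const_zero, zero_add,
      Set.indicator_of_mem hx]
  have hφzero : ∀ x ∉ cube d k, φ x = 0 := by
    intro x hx
    have h1 : ∀ i ∈ S, (V i).indicator (fun y => (A i - F) y) x = 0 := fun i _ =>
      Set.indicator_of_notMem (fun hxV => hx (hVs i hxV)) _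
    have h2 : x ∉ O := fun hxO => hx (hOsub hxO)
    simp only [hφdef, Finset.sum_congr rfl h1, Finset.sum_const_zero, zero_add,
      Set.indicator_of_notMem h2]
  have hφext : Set.EqOn φ (fun y => (0 : Mat d) y) (closure (cube d k))ᶜ := by
    intro x hx
    rw [hφzero x (fun hxc => hx (subset_closure hxc))]
    simp
  have hloc : ∀ (L : Mat d) (U : Set (Esp d)), IsOpen U → Set.EqOn φ (fun y => L y) U →
      ∀ x ∈ U, DifferentiableAt ℝ φ x ∧ fderiv ℝ φ x = L := by
    intro L U hUo hUeq x hx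
    have hev : φ =ᶠ[𝓝 x] fun y => L y := eventually_of_mem (hUo.mem_nhds hx) hUeq
    refine ⟨L.differentiableAt.congr_of_eventuallyEq hev, ?_⟩
    rw [hev.fderiv_eq, L.fderiv]
  set Bad : Set (Esp d) := frontier (cube d k) ∪ ⋃ j ∈ S, frontier (V j) with hBaddef
  have hBadnull : volume Bad = 0 :=
    measure_union_null THC_frontier_cube_null
      ((measure_biUnion_null_iff S.countable_toSet).mpr fun j _ => hVf j)
  have hgoodext : ∀ x, x ∉ closure (cube d k) → DifferentiableAt ℝ φ x ∧ fderiv ℝ φ x = 0 := by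
    intro x hx
    exact hloc 0 (closure (cube d k))ᶜ isClosed_closure.isOpen_compl hφext x hx
  have hgood : ∀ x, x ∉ Bad → x ∈ cube d k →
      DifferentiableAt ℝ φ x ∧
        ((∃ j ∈ S, x ∈ V j ∧ fderiv ℝ φ x = A j - F) ∨ (x ∈ O ∧ fderiv ℝ φ x = A₀ - F)) := by
    intro x hx hxcube
    by_cases hxV : ∃ j ∈ S, x ∈ V j
    · obtain ⟨j, hj, hxj⟩ := hxV
      obtain ⟨hdiff, hfd⟩ := hloc (A j - F) (V j) (hVo j) (hφV j hj) x hxj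
      exact ⟨hdiff, Or.inl ⟨j, hj, hxj, hfd⟩⟩
    · have hxO : x ∈ O := by
        refine ⟨hxcube, fun hmem => ?_⟩
        obtain ⟨j, hj, hxcl⟩ := mem_iUnion₂.mp hmem
        have hxfr : x ∈ frontier (V j) := by
          rw [frontier_eq_closure_inter_closure]
          refine ⟨hxcl, ?_⟩
          have hxint : x ∉ V j := fun hxj => hxV ⟨j, hj, hxj⟩
          exact subset_closure hxint
        exact hx (Or.inr (Set.mem_biUnion hj hxfr))
      obtain ⟨hdiff, hfd⟩ := hloc (A₀ - F) O hOopen hφO x hxO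
      exact ⟨hdiff, Or.inr ⟨hxO, hfd⟩⟩
  have hdiff_ae : ∀ x, x ∉ Bad → DifferentiableAt ℝ φ x := by
    intro x hx
    by_cases hxc : x ∈ closure (cube d k)
    · have hxcube : x ∈ cube d k := by
        by_contra hxnc
        exact hx (Or.inl ⟨hxc, by rwa [THC_isOpen_cube.interior_eq]⟩)
      exact (hgood x hx hxcube).1
    · exact (hgoodext x hxc).1
  have haeBad : ∀ᵐ x : Esp d, x ∉ Bad := measure_eq_zero_iff_ae_notMem.mp hBadnull
  -- norm bounds
  set Cb : ℝ := (∑ j ∈ S, ‖A j - F‖) + ‖A₀ - F‖ with hCbdef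
  have hCb0 : 0 ≤ Cb := by positivity
  have hsingle : ∀ j ∈ S, ‖A j - F‖ ≤ Cb := by
    intro j hj
    refine le_trans ?_ (le_add_of_nonneg_right (norm_nonneg _))
    exact Finset.single_le_sum (fun i _ => norm_nonneg (A i - F)) hj
  have hA₀le : ‖A₀ - F‖ ≤ Cb := le_add_of_nonneg_left (Finset.sum_nonneg fun i _ => norm_nonneg _)
  have hφbound : ∀ x, ‖φ x‖ ≤ Cb * ‖x‖ := by
    intro x
    rw [hφdef]
    refine (norm_add_le _ _).trans ?_
    have h1 : ‖∑ j ∈ S, (V j).indicator (fun y => (A j - F) y) x‖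
        ≤ ∑ j ∈ S, ‖A j - F‖ * ‖x‖ := by
      refine (norm_sum_le _ _).trans (Finset.sum_le_sum fun j _ => ?_)
      exact (norm_indicator_le_norm_self _ _).trans ((A j - F).le_opNorm x)
    have h2 : ‖O.indicator (fun y => (A₀ - F) y) x‖ ≤ ‖A₀ - F‖ * ‖x‖ :=
      (norm_indicator_le_norm_self _ _).trans ((A₀ - F).le_opNorm x)
    calc _ ≤ (∑ j ∈ S, ‖A j - F‖ * ‖x‖) + ‖A₀ - F‖ * ‖x‖ := add_le_add h1 h2
    _ = Cb * ‖x‖ := by rw [hCbdef, ← Finset.sum_mul, add_mul]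
  set R : ℝ := ((d + 1 : ℕ) : ℝ) * ((k + 1 : ℕ) : ℝ) with hRdef
  have hR0 : 0 ≤ R := by positivity
  have hnormx : ∀ x ∈ cube d k, ‖x‖ ≤ R := by
    intro x hx
    have := THC_cube_subset_closedBall hx
    rwa [Metric.mem_closedBall, dist_zero_right] at this
  have hmeas : Measurable φ := by
    refine Measurable.add ?_ ?_
    · exact Finset.measurable_sum _ fun j _ =>
        ((A j - F).continuous.measurable).indicator (hVo j).measurableSet
    · exact ((A₀ - F).continuous.measurable).indicator hOopen.measurableSet
  -- the two integral bounds
  set CM : ℝ≥0∞ := ENNReal.ofReal ((Cb * R + 1) ^ p) with hCMdef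
  have hCMne : CM ≠ ∞ := ENNReal.ofReal_ne_top
  have hint1 : (∫⁻ x in Set.univ, (‖φ x‖₊ : ℝ≥0∞) ^ p ∂volume) < ∞ := by
    have hb : ∀ x, (‖φ x‖₊ : ℝ≥0∞) ^ p ≤ (cube d k).indicator (fun _ => CM) x := by
      intro x
      by_cases hx : x ∈ cube d k
      · rw [Set.indicator_of_mem hx]
        rw [show ((‖φ x‖₊ : ℝ≥0∞)) = ENNReal.ofReal ‖φ x‖ from (ofReal_norm _).symm, hCMdef]
        rw [ENNReal.ofReal_rpow_of_nonneg (norm_nonneg _) hp0.le]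
        refine ENNReal.ofReal_le_ofReal ?_
        have h1 : ‖φ x‖ ≤ Cb * R + 1 := by
          have := (hφbound x).trans (mul_le_mul_of_nonneg_left (hnormx x hx) hCb0)
          linarith
        exact Real.rpow_le_rpow (norm_nonneg _) h1 hp0.le
      · rw [Set.indicator_of_notMem hx, hφzero x hx]
        simp [ENNReal.zero_rpow_of_pos hp0]
    calc (∫⁻ x in Set.univ, (‖φ x‖₊ : ℝ≥0∞) ^ p ∂volume)
        ≤ ∫⁻ x in Set.univ, (cube d k).indicator (fun _ => CM) x ∂volume :=
          lintegral_mono hb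
    _ = CM * volume (cube d k) := by
        rw [Measure.restrict_univ, lintegral_indicator THC_isOpen_cube.measurableSet]
        simp
    _ < ∞ := ENNReal.mul_lt_top hCMne.lt_top THC_cube_measure_lt_top
  have hint2 : (∫⁻ x in Set.univ, (‖fderiv ℝ φ x‖₊ : ℝ≥0∞) ^ p ∂volume) < ∞ := by
    set CM' : ℝ≥0∞ := ENNReal.ofReal ((Cb + 1) ^ p) with hCM'def
    have hb : ∀ᵐ x : Esp d,
        (‖fderiv ℝ φ x‖₊ : ℝ≥0∞) ^ p ≤ (cube d k).indicator (fun _ => CM') x := by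
      filter_upwards [haeBad] with x hx
      by_cases hxc : x ∈ cube d k
      · rw [Set.indicator_of_mem hxc]
        have hfb : ‖fderiv ℝ φ x‖ ≤ Cb := by
          rcases (hgood x hx hxc).2 with ⟨j, hj, _, hfd⟩ | ⟨_, hfd⟩
          · rw [hfd]; exact hsingle j hj
          · rw [hfd]; exact hA₀le
        rw [show ((‖fderiv ℝ φ x‖₊ : ℝ≥0∞)) = ENNReal.ofReal ‖fderiv ℝ φ x‖ from (ofReal_norm _).symm, hCM'def,
          ENNReal.ofReal_rpow_of_nonneg (norm_nonneg _) hp0.le]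
        exact ENNReal.ofReal_le_ofReal
          (Real.rpow_le_rpow (norm_nonneg _) (by linarith) hp0.le)
      · have hfd0 : fderiv ℝ φ x = 0 := by
          by_cases hxcl : x ∈ closure (cube d k)
          · exact absurd (Or.inl ⟨hxcl, by rwa [THC_isOpen_cube.interior_eq]⟩) hx
          · exact (hgoodext x hxcl).2
        rw [hfd0]
        simp [ENNReal.zero_rpow_of_pos hp0]
    calc (∫⁻ x in Set.univ, (‖fderiv ℝ φ x‖₊ : ℝ≥0∞) ^ p ∂volume)
        ≤ ∫⁻ x in Set.univ, (cube d k).indicator (fun _ => CM') x ∂volume := by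
          rw [Measure.restrict_univ]
          exact lintegral_mono_ae hb
    _ = CM' * volume (cube d k) := by
        rw [lintegral_indicator THC_isOpen_cube.measurableSet]
        simp
    _ < ∞ := ENNReal.mul_lt_top ENNReal.ofReal_ne_top.lt_top THC_cube_measure_lt_top
  refine ⟨φ, ⟨⟨hmeas.aestronglyMeasurable, ?_, hint1, hint2⟩, hφzero⟩, ?_, ?_⟩
  · rw [Measure.restrict_univ]
    filter_upwards [haeBad] with x hx
    exact hdiff_ae x hx
  · intro j hj x hx
    have hjS : j ∈ S := by simp [hS, Nat.lt_succ_iff, hj]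
    rw [(hloc (A j - F) (V j) (hVo j) (hφV j hjS) x hx).2]
    abel
  · intro x hx
    rw [(hloc (A₀ - F) O hOopen hφO x hx).2]
    abel

end THCAux

/-- **Proposition (commutation of truncation and homogenization for finite-cell formulas).**
Under Assumption A, the `p`-growth lower bound and polyconvexity of `W(x,·)` and of its
extension `W̃(x,·)`, for every `k` and every `F`,
`sup_n \overline{W}^{(k)}_n(F) = \overline{W}^{(k)}(F)`. -/
theorem truncation_homogenization_commute (d : ℕ) (hd : 2 ≤ d)
    (W : Esp d → Mat d → ℝ≥0∞) (c : ℝ≥0) (hW : Setting d W) (hA : AssumptionA d W c)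
    (p : ℝ) (hp : (d : ℝ) ≤ p)
    (hlow : ∀ᵐ x : Esp d, ∀ F ∈ Sig d,
      (c : ℝ≥0∞)⁻¹ * (‖F‖₊ : ℝ≥0∞) ^ p - c ≤ W x F)
    (Wt : Esp d → Mat d → ℝ≥0∞) (hWt : ExtSetting d W Wt c p)
    (hpolyW : ∀ᵐ x : Esp d, PolyconvexE (W x))
    (hpolyWt : ∀ᵐ x : Esp d, PolyconvexE (Wt x)) :
    ∀ k : ℕ, 0 < k → ∀ F : Mat d,
      (⨆ n : ℕ, WbarNk Wt p n k F) = Wbark W p k F := by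
  classical
  intro k hk F
  have hd1 : (1:ℝ) ≤ (d:ℝ) := by exact_mod_cast le_trans one_le_two hd
  have hp1 : (1:ℝ) ≤ p := le_trans hd1 hp
  have hp0 : (0:ℝ) < p := lt_of_lt_of_le one_pos hp1
  set μc := volume (cube d k) with hμcdef
  have hμc0 : μc ≠ 0 := (THC_cube_measure_pos hk).ne'
  have hμcT : μc ≠ ∞ := THC_cube_measure_lt_top.ne
  apply le_antisymm
  · -- easy inequality: `sup_n WbarNk ≤ Wbark` since `Wtrunc ≤ W` pointwise
    refine iSup_le fun n => le_iInf fun φ => le_iInf fun hφ => ?_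
    refine le_trans (iInf₂_le φ hφ) ?_
    rw [setLAverage_eq, setLAverage_eq]
    refine ENNReal.div_le_div_right (lintegral_mono fun x => ?_) _
    exact THC_wtrunc_le n hWt.agree hW.infinite_off x _
  · -- hard inequality
    set Ig := ∫⁻ x in cube d k, THC_g d Wt p x ∂volume with hIgdef
    -- Step 1: `Ig / μc ≤ sup_n WbarNk`
    have lowint : ∀ n : ℕ,
        (∫⁻ x in cube d k, THC_hN d Wt p n x ∂volume) / μc ≤ WbarNk Wt p n k F := by
      intro n
      refine le_iInf fun φ => le_iInf fun hφ => ?_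
      rw [setLAverage_eq]
      refine ENNReal.div_le_div_right (lintegral_mono_ae ?_) _
      refine ae_restrict_of_ae ?_
      filter_upwards [hWt.cont] with x hx
      exact THC_hN_le Wt p n hx _
    have hg_int_le : Ig / μc ≤ ⨆ n, WbarNk Wt p n k F := by
      have hmct : Ig = ⨆ n, ∫⁻ x in cube d k, THC_hN d Wt p n x ∂volume := by
        rw [hIgdef]
        have : (fun x => THC_g d Wt p x) = fun x => ⨆ n, THC_hN d Wt p n x := rfl
        rw [this]
        exact lintegral_iSup (fun n => THC_hN_measurable Wt p n hWt.meas)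
          (fun m n h x => THC_hN_mono Wt p x h)
      rw [hmct, ENNReal.iSup_div]
      exact iSup_mono lowint
    refine le_trans ?_ hg_int_le
    -- Step 2: `Wbark ≤ Ig / μc`
    refine ENNReal.le_of_forall_pos_le_add fun ε₀ hε₀ _ => ?_
    have key : ∀ η : ℝ≥0∞, 0 < η → η ≠ ∞ →
        Wbark W p k F ≤ Ig / μc + (η + η + η) := by
      intro η hη0 hηT
      set ημ := η * μc with hημdef
      have hημ0 : ημ ≠ 0 := mul_ne_zero hη0.ne' hμc0
      have hημT : ημ ≠ ∞ := ENNReal.mul_ne_top hηT hμcT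
      have hc0 : (c : ℝ≥0∞) ≠ 0 := by
        exact_mod_cast (lt_of_lt_of_le one_pos hA.hc).ne'
      -- the constants
      set M : ℕ → ℝ≥0∞ := fun j => (c : ℝ≥0∞) * (Whom d W (THC_E d j) + 1) with hMdef
      have hMfin : ∀ j, M j ≠ ∞ := fun j => ENNReal.mul_ne_top coe_ne_top
        (ENNReal.add_ne_top.2 ⟨hA.whomFin _ (THC_E_mem d j), one_ne_top⟩)
      have hM0 : ∀ j, M j ≠ 0 := fun j => mul_ne_zero hc0 (by simp)
      set M₀ : ℝ≥0∞ := (c : ℝ≥0∞) * (Whom d W 1 + 1) with hM₀def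
      have hM₀fin : M₀ ≠ ∞ := ENNReal.mul_ne_top coe_ne_top
        (ENNReal.add_ne_top.2 ⟨hA.whomFin _ THC_one_mem_Sig, one_ne_top⟩)
      have hM₀0 : M₀ ≠ 0 := mul_ne_zero hc0 (by simp)
      -- the sets P j
      set P : ℕ → Set (Esp d) := fun j =>
        cube d k ∩ {x | W x (THC_E d j) ≤ THC_g d Wt p x + η} with hPdef
      have hPmeas : ∀ j, MeasurableSet (P j) := fun j =>
        THC_isOpen_cube.measurableSet.inter
          (measurableSet_le (hW.meas _)
            ((THC_g_measurable Wt p hWt.meas).add measurable_const))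
      have hPsub : ∀ j, P j ⊆ cube d k := fun j => inter_subset_left
      -- coverage
      have hcover : ∀ᵐ x : Esp d, x ∈ cube d k → ∃ j, x ∈ P j := by
        filter_upwards [hW.cont, hWt.cont, hWt.lower] with x hWc hWtc hWtl
        intro hxcube
        by_cases hg : THC_g d Wt p x = ∞
        · exact ⟨0, hxcube, by simp only [Set.mem_setOf_eq, hg, top_add]; exact le_top⟩
        · obtain ⟨Gs, hGsSig, hGsle⟩ :=
            THC_exists_min Wt hp1 hA.hc hWtc hWtl (fun G => hWt.fin x G) hg
          have hWGs : W x Gs ≤ THC_g d Wt p x := by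
            rw [← hWt.agree x Gs hGsSig]; exact hGsle
          have hlt : (⨅ j, W x (THC_E d j)) < THC_g d Wt p x + η :=
            lt_of_le_of_lt (le_trans (THC_iInf_E_le hWc hGsSig) hWGs)
              (ENNReal.lt_add_right hg hη0.ne')
          obtain ⟨j, hj⟩ := iInf_lt_iff.mp hlt
          exact ⟨j, hxcube, hj.le⟩
      -- disjointified pieces and vanishing tail
      set Pd : ℕ → Set (Esp d) := disjointed P with hPddef
      have hPdmeas : ∀ j, MeasurableSet (Pd j) := MeasurableSet.disjointed hPmeas
      have hPdsub : ∀ j, Pd j ⊆ P j := disjointed_subset P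
      have hPddisj : ∀ i j, i ≠ j → Disjoint (Pd i) (Pd j) := fun i j hij =>
        disjoint_disjointed P hij
      set Q : ℕ → Set (Esp d) := fun n => cube d k \ ⋃ j ∈ Finset.range (n+1), Pd j with hQdef
      have hQmeas : ∀ n, MeasurableSet (Q n) := fun n =>
        THC_isOpen_cube.measurableSet.diff
          (MeasurableSet.biUnion (Finset.range (n+1)).countable_toSet fun j _ => hPdmeas j)
      have hQanti : Antitone Q := by
        intro m n hmn
        refine diff_subset_diff_right ?_
        refine iUnion₂_subset fun j hj => ?_
        refine subset_biUnion_of_mem (u := Pd) ?_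
        have := Finset.mem_range.mp hj
        exact Finset.mem_range.mpr (by omega)
      have hQiInter : volume (⋂ n, Q n) = 0 := by
        have h2 : (⋃ n, ⋃ j ∈ Finset.range (n+1), Pd j) = ⋃ j, Pd j := by
          apply Subset.antisymm
          · exact iUnion_subset fun n => iUnion₂_subset fun j _ => subset_iUnion Pd j
          · refine iUnion_subset fun j => ?_
            refine subset_iUnion_of_subset j ?_
            exact subset_biUnion_of_mem (u := Pd) (Finset.self_mem_range_succ j)
        have h1 : (⋂ n, Q n) = cube d k \ ⋃ j, P j := by
          rw [hQdef]
          rw [← Set.diff_iUnion, h2, iUnion_disjointed]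
        rw [h1]
        have h4 := ae_iff.mp hcover
        refine measure_mono_null ?_ h4
        rintro x ⟨hxc, hxn⟩
        simp only [mem_setOf_eq]
        exact fun himp => hxn (mem_iUnion.mpr (himp hxc))
      have htail : Tendsto (fun n => volume (Q n)) atTop (𝓝 0) := by
        have h5 := tendsto_measure_iInter_atTop (μ := volume)
          (fun n => (hQmeas n).nullMeasurableSet) hQanti
          ⟨0, ((measure_mono diff_subset).trans_lt THC_cube_measure_lt_top).ne⟩
        rw [hQiInter] at h5
        exact h5
      set tailb : ℝ≥0∞ := (ημ / 2) / M₀ with htailbdef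
      have htailb0 : 0 < tailb :=
        ENNReal.div_pos (ENNReal.div_pos hημ0 ENNReal.ofNat_ne_top).ne' hM₀fin
      obtain ⟨N, hN⟩ := (htail.eventually_lt_const htailb0).exists
      have hN1ne : ((N:ℝ≥0∞)+1) ≠ ∞ := ENNReal.add_ne_top.2 ⟨natCast_ne_top _, one_ne_top⟩
      have hN1ne0 : ((N:ℝ≥0∞)+1) ≠ 0 := (lt_of_lt_of_le zero_lt_one le_add_self).ne'
      set κ : ℝ≥0∞ := tailb / ((N:ℝ≥0∞)+1) with hκdef
      have hκ0 : κ ≠ 0 := (ENNReal.div_pos htailb0.ne' hN1ne).ne'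
      -- compact approximations from inside
      have hKex : ∀ j, ∃ K : Set (Esp d), IsCompact K ∧ K ⊆ Pd j ∧ volume (Pd j \ K) ≤ κ := by
        intro j
        have hfin : volume (Pd j) ≠ ∞ :=
          ((measure_mono ((hPdsub j).trans (hPsub j))).trans_lt THC_cube_measure_lt_top).ne
        obtain ⟨K, hKsub, hKcomp, hKlt⟩ := (hPdmeas j).exists_isCompact_lt_add hfin hκ0
        refine ⟨K, hKcomp, hKsub, ?_⟩
        exact (measure_diff_lt_of_lt_add hKcomp.isClosed.measurableSet.nullMeasurableSet hKsub
          ((measure_mono hKsub).trans_lt hfin.lt_top).ne hKlt).le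
      choose K hKcomp hKsub hKκ using hKex
      have hKdisj : ∀ i j, i ≠ j → Disjoint (K i) (K j) := fun i j hij =>
        (hPddisj i j hij).mono (hKsub i) (hKsub j)
      obtain ⟨δsep, hδsep0, hδsepdisj⟩ := THC_sep N K hKcomp hKdisj
      set τ : ℕ → ℝ≥0∞ := fun j => (ημ / ((N:ℝ≥0∞)+1)) / M j with hτdef
      have hτ0 : ∀ j, 0 < τ j := fun j =>
        ENNReal.div_pos (ENNReal.div_pos hημ0 hN1ne).ne' (hMfin j)
      -- the open pieces
      have hVex : ∀ j, ∃ V : Set (Esp d), IsOpen V ∧ V ⊆ cube d k ∧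
          volume (frontier V) = 0 ∧
          (j ≤ N → K j ⊆ V ∧ volume (V \ K j) ≤ τ j ∧ V ⊆ Metric.thickening δsep (K j)) ∧
          (¬ j ≤ N → V = ∅) := by
        intro j
        by_cases hj : j ≤ N
        · obtain ⟨δc, hδc0, hδcsub⟩ := (hKcomp j).exists_thickening_subset_open
            THC_isOpen_cube ((hKsub j).trans ((hPdsub j).trans (hPsub j)))
          have hKfin : volume (K j) ≠ ∞ :=
            ((measure_mono ((hKsub j).trans ((hPdsub j).trans (hPsub j)))).trans_lt
              THC_cube_measure_lt_top).ne
          have hμtend := tendsto_measure_thickening_of_isClosed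
            ⟨1, one_pos, ((measure_mono (Metric.thickening_subset_cthickening _ _)).trans_lt
              ((hKcomp j).cthickening.measure_lt_top (μ := volume))).ne⟩ (hKcomp j).isClosed
          have hev1 : ∀ᶠ δ in 𝓝[>] (0:ℝ),
              volume (Metric.thickening δ (K j)) < volume (K j) + τ j :=
            hμtend.eventually_lt_const (ENNReal.lt_add_right hKfin (hτ0 j).ne')
          have hev2 : ∀ᶠ δ in 𝓝[>] (0:ℝ), δ ∈ Ioo (0:ℝ) (min δc δsep) :=
            Ioo_mem_nhdsGT_of_mem ⟨le_refl 0, lt_min hδc0 hδsep0⟩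
          obtain ⟨δ, hδth, hδ0, hδlt⟩ := (hev1.and hev2).exists
          obtain ⟨V, hVopen, hKV, hVsubth, hVfront⟩ := THC_ball_refine (hKcomp j)
            Metric.isOpen_thickening (Metric.self_subset_thickening hδ0 _)
          refine ⟨V, hVopen, ?_, hVfront, fun _ => ⟨hKV, ?_, ?_⟩, fun h => absurd hj h⟩
          · exact hVsubth.trans ((Metric.thickening_mono
              (le_of_lt (lt_of_lt_of_le hδlt (min_le_left _ _))) _).trans hδcsub)
          · refine le_trans (measure_mono (diff_subset_diff_left hVsubth)) ?_
            exact (measure_diff_lt_of_lt_add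
              (hKcomp j).isClosed.measurableSet.nullMeasurableSet
              (Metric.self_subset_thickening hδ0 _) hKfin hδth).le
          · exact hVsubth.trans (Metric.thickening_mono
              (le_of_lt (lt_of_lt_of_le hδlt (min_le_right _ _))) _)
        · exact ⟨∅, isOpen_empty, empty_subset _, by simp, fun h => absurd h hj, fun _ => rfl⟩
      choose VV hVVopen hVVsub hVVfront hVVle hVVempty using hVex
      have hVVdisj : ∀ i j, i ≠ j → Disjoint (VV i) (VV j) := by
        intro i j hij
        by_cases hi : i ≤ N
        · by_cases hjN : j ≤ N
          · exact (hδsepdisj i hi j hjN hij).mono ((hVVle i hi).2.2) ((hVVle j hjN).2.2)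
          · rw [hVVempty j hjN]; exact disjoint_empty _
        · rw [hVVempty i hi]; exact empty_disjoint _
      -- the competitor
      obtain ⟨φ, hφmem, hφV, hφO⟩ :=
        THC_construct hp1 F N VV (THC_E d) 1 hVVopen hVVsub hVVdisj hVVfront
      set O : Set (Esp d) := cube d k \ ⋃ j ∈ Finset.range (N+1), closure (VV j) with hOdef
      have hOmeas : MeasurableSet O :=
        THC_isOpen_cube.measurableSet.diff
          (MeasurableSet.biUnion (Finset.range (N+1)).countable_toSet
            fun j _ => isClosed_closure.measurableSet)
      set SInd : Esp d → ℝ≥0∞ := fun x =>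
        ∑ j ∈ Finset.range (N+1), ((VV j) \ Pd j).indicator (fun _ => M j) x with hSInddef
      set OInd : Esp d → ℝ≥0∞ := fun x => O.indicator (fun _ => M₀) x with hOInddef
      have hFrBad : volume (⋃ j ∈ Finset.range (N+1), frontier (VV j)) = 0 :=
        (measure_biUnion_null_iff (Finset.range (N+1)).countable_toSet).mpr
          fun j _ => hVVfront j
      -- the pointwise bound
      have hptwise : ∀ᵐ x ∂(volume.restrict (cube d k)),
          W x (F + fderiv ℝ φ x) ≤ (THC_g d Wt p x + η) + (SInd x + OInd x) := by
        rw [ae_restrict_iff' THC_isOpen_cube.measurableSet]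
        filter_upwards [hA.upper, measure_eq_zero_iff_ae_notMem.mp hFrBad] with x hup hxf hxcube
        by_cases hxV : ∃ j ∈ Finset.range (N+1), x ∈ VV j
        · obtain ⟨j, hjS, hxj⟩ := hxV
          have hjN : j ≤ N := Nat.lt_succ_iff.mp (Finset.mem_range.mp hjS)
          rw [hφV j hjN x hxj]
          by_cases hxPd : x ∈ Pd j
          · exact le_trans (hPdsub j hxPd).2 le_self_add
          · refine le_trans (hup _ (THC_E_mem d j)) ?_
            show M j ≤ _
            have h2 : M j = ((VV j) \ Pd j).indicator (fun _ => M j) x :=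
              (Set.indicator_of_mem (show x ∈ (VV j) \ Pd j from ⟨hxj, hxPd⟩)
                (fun _ => M j)).symm
            rw [h2]
            refine le_trans (Finset.single_le_sum
              (f := fun i => ((VV i) \ Pd i).indicator (fun _ => M i) x)
              (fun i _ => by simp) hjS) ?_
            exact le_trans le_self_add le_add_self
        · by_cases hxO : x ∈ O
          · rw [hφO x hxO]
            refine le_trans (hup _ THC_one_mem_Sig) ?_
            show M₀ ≤ _
            rw [show M₀ = O.indicator (fun _ => M₀) x from (Set.indicator_of_mem hxO (fun _ => M₀)).symm]
            exact le_trans le_add_self le_add_self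
          · exfalso
            have hxcl : x ∈ ⋃ j ∈ Finset.range (N+1), closure (VV j) := by
              by_contra hxncl
              exact hxO ⟨hxcube, hxncl⟩
            obtain ⟨j, hjS, hxclj⟩ := mem_iUnion₂.mp hxcl
            refine hxf (Set.mem_biUnion hjS ?_)
            rw [frontier_eq_closure_inter_closure]
            exact ⟨hxclj, subset_closure (fun hxj => hxV ⟨j, hjS, hxj⟩)⟩
      -- volume of the leftover region
      have hOsub2 : O ⊆ (⋃ j ∈ Finset.range (N+1), (Pd j \ K j)) ∪ Q N := by
        rintro x ⟨hxc, hxncl⟩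
        by_cases hxPd : ∃ j ∈ Finset.range (N+1), x ∈ Pd j
        · obtain ⟨j, hjS, hxj⟩ := hxPd
          have hjN : j ≤ N := Nat.lt_succ_iff.mp (Finset.mem_range.mp hjS)
          refine Or.inl (Set.mem_biUnion hjS ⟨hxj, fun hxK => ?_⟩)
          exact hxncl (Set.mem_biUnion hjS (subset_closure ((hVVle j hjN).1 hxK)))
        · refine Or.inr ⟨hxc, fun hmem => hxPd ?_⟩
          obtain ⟨j, hjS, hxj⟩ := mem_iUnion₂.mp hmem
          exact ⟨j, hjS, hxj⟩
      have hsumκ : ∑ _j ∈ Finset.range (N+1), κ = tailb := by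
        rw [Finset.sum_const, Finset.card_range, nsmul_eq_mul, hκdef]
        rw [show ((N+1 : ℕ) : ℝ≥0∞) = (N:ℝ≥0∞)+1 by push_cast; ring]
        exact ENNReal.mul_div_cancel hN1ne0 hN1ne
      have hvolO : volume O ≤ tailb + tailb := by
        refine le_trans (measure_mono hOsub2) ?_
        refine le_trans (measure_union_le _ _) (add_le_add ?_ hN.le)
        refine le_trans (measure_biUnion_finset_le _ _) ?_
        refine le_trans (Finset.sum_le_sum fun j _ => hKκ j) hsumκ.le
      -- integrating the bound
      have hint : (∫⁻ x in cube d k, W x (F + fderiv ℝ φ x) ∂volume)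
          ≤ Ig + ημ + (ημ + ημ) := by
        refine le_trans (lintegral_mono_ae hptwise) ?_
        have hmeasg : Measurable fun x => THC_g d Wt p x + η :=
          (THC_g_measurable Wt p hWt.meas).add measurable_const
        have hmeasj : ∀ j ∈ Finset.range (N+1),
            Measurable fun x : Esp d => ((VV j) \ Pd j).indicator (fun _ => M j) x :=
          fun j _ => measurable_const.indicator ((hVVopen j).measurableSet.diff (hPdmeas j))
        have hmeasS : Measurable SInd := Finset.measurable_sum _ hmeasj
        have e1 : (∫⁻ x in cube d k, ((THC_g d Wt p x + η) + (SInd x + OInd x)) ∂volume)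
            = (∫⁻ x in cube d k, (THC_g d Wt p x + η) ∂volume)
              + ∫⁻ x in cube d k, (SInd x + OInd x) ∂volume :=
          lintegral_add_left hmeasg _
        have e2 : (∫⁻ x in cube d k, (THC_g d Wt p x + η) ∂volume) = Ig + η * μc := by
          rw [lintegral_add_left (THC_g_measurable Wt p hWt.meas), setLIntegral_const]
        have e3 : (∫⁻ x in cube d k, (SInd x + OInd x) ∂volume)
            = (∫⁻ x in cube d k, SInd x ∂volume) + ∫⁻ x in cube d k, OInd x ∂volume :=
          lintegral_add_left hmeasS _
        have e4 : (∫⁻ x in cube d k, SInd x ∂volume) ≤ ημ := by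
          rw [hSInddef]
          rw [lintegral_finset_sum _ hmeasj]
          have hterm : ∀ j ∈ Finset.range (N+1),
              (∫⁻ x in cube d k, ((VV j) \ Pd j).indicator (fun _ => M j) x ∂volume)
                ≤ ημ / ((N:ℝ≥0∞)+1) := by
            intro j hjS
            have hjN : j ≤ N := Nat.lt_succ_iff.mp (Finset.mem_range.mp hjS)
            refine le_trans (setLIntegral_le_lintegral _ _) ?_
            rw [lintegral_indicator ((hVVopen j).measurableSet.diff (hPdmeas j)),
              setLIntegral_const]
            have hsub : (VV j) \ Pd j ⊆ (VV j) \ K j := diff_subset_diff_right (hKsub j)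
            have hv : volume ((VV j) \ Pd j) ≤ τ j :=
              le_trans (measure_mono hsub) ((hVVle j hjN).2.1)
            calc M j * volume ((VV j) \ Pd j) ≤ M j * τ j := by gcongr
            _ = ημ / ((N:ℝ≥0∞)+1) := ENNReal.mul_div_cancel (hM0 j) (hMfin j)
          refine le_trans (Finset.sum_le_sum hterm) ?_
          rw [Finset.sum_const, Finset.card_range, nsmul_eq_mul,
            show ((N+1 : ℕ) : ℝ≥0∞) = (N:ℝ≥0∞)+1 by push_cast; ring]
          exact (ENNReal.mul_div_cancel hN1ne0 hN1ne).le
        have e5 : (∫⁻ x in cube d k, OInd x ∂volume) ≤ ημ := by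
          rw [hOInddef]
          refine le_trans (setLIntegral_le_lintegral _ _) ?_
          rw [lintegral_indicator hOmeas, setLIntegral_const]
          calc M₀ * volume O ≤ M₀ * (tailb + tailb) := by gcongr
          _ = M₀ * tailb + M₀ * tailb := mul_add _ _ _
          _ = ημ / 2 + ημ / 2 := by
              rw [htailbdef, ENNReal.mul_div_cancel hM₀0 hM₀fin]
          _ = ημ := ENNReal.add_halves _
        calc (∫⁻ x in cube d k, ((THC_g d Wt p x + η) + (SInd x + OInd x)) ∂volume)
            = (Ig + η * μc) + ((∫⁻ x in cube d k, SInd x ∂volume)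
              + ∫⁻ x in cube d k, OInd x ∂volume) := by rw [e1, e2, e3]
        _ ≤ (Ig + ημ) + (ημ + ημ) := by
            rw [hημdef]
            exact add_le_add le_rfl (add_le_add e4 e5)
        _ = Ig + ημ + (ημ + ημ) := by ring
      -- conclusion of `key`
      have hWbar : Wbark W p k F ≤ (Ig + ημ + (ημ + ημ)) / μc := by
        refine le_trans (iInf_le_of_le φ (iInf_le _ hφmem)) ?_
        rw [setLAverage_eq]
        exact ENNReal.div_le_div_right hint _
      refine le_trans hWbar ?_
      have hcancel : ημ / μc = η := by
        rw [hημdef, div_eq_mul_inv, mul_assoc, ENNReal.mul_inv_cancel hμc0 hμcT, mul_one]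
      rw [ENNReal.add_div, ENNReal.add_div, ENNReal.add_div, hcancel]
      exact le_of_eq (by ring)
    have hη0 : (0:ℝ≥0∞) < (ε₀ : ℝ≥0∞)/3 :=
      ENNReal.div_pos (ENNReal.coe_ne_zero.2 hε₀.ne') (by norm_num)
    have hηT : ((ε₀ : ℝ≥0∞)/3) ≠ ∞ := (ENNReal.div_lt_top coe_ne_top (by norm_num)).ne
    refine le_trans (key _ hη0 hηT) ?_
    refine add_le_add le_rfl ?_
    have h3 : (ε₀ : ℝ≥0∞)/3 + (ε₀ : ℝ≥0∞)/3 + (ε₀ : ℝ≥0∞)/3 = 3 * ((ε₀ : ℝ≥0∞)/3) := by ring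
    rw [h3, ENNReal.mul_div_cancel' (by norm_num) (by norm_num)]

end
end

section
/- Let p ≥ d ≥ 2 and let f : ℝ^{d×d} → [0, ∞) be a finite, nonnegative polyconvex function. For n ∈ ℕ set V_n(F) := min{f(F), n(|F|^p + 1)} and let P V_n denote the polyconvex envelope of V_n (the greatest polyconvex function below V_n). Then the sequence (P V_n)_n is nondecreasing and sup_{n ∈ ℕ} P V_n(F) = f(F) for every F ∈ ℝ^{d×d}. -/
open MeasureTheory ENNReal Filter Set
open scoped Topology NNReal RealInnerProductSpace

noncomputable section

/-! ### Auxiliary lemmas -/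

noncomputable instance minorIdxFintype (d : ℕ) : Fintype (minorIdx d) := by
  haveI : ∀ k : ℕ, Finite (Fin k ↪o Fin d) := fun k =>
    Finite.of_injective (fun e => (e : Fin k → Fin d)) DFunLike.coe_injective
  haveI : Finite (minorIdx d) := by unfold minorIdx; infer_instance
  exact Fintype.ofFinite _

/-- Existence of a supporting affine minorant for a convex function on a
finite-dimensional space. -/
lemma exists_affine_minorant {E : Type*} [NormedAddCommGroup E] [NormedSpace ℝ E]
    [FiniteDimensional ℝ E] {g : E → ℝ} (hg : ConvexOn ℝ Set.univ g) (v0 : E) :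
    ∃ (c : ℝ) (A : E →L[ℝ] ℝ), (∀ v, c + A v ≤ g v) ∧ c + A v0 = g v0 := by
  have hcont : Continuous g := by
    have h := hg.continuousOn isOpen_univ
    exact continuousOn_univ.mp h
  set S : Set (E × ℝ) := {q | g q.1 < q.2} with hS
  have hopen : IsOpen S := isOpen_lt (hcont.comp continuous_fst) continuous_snd
  have hconv : Convex ℝ S := by
    rintro q hq r hr a b ha hb hab
    have h1 : g (a • q.1 + b • r.1) ≤ a * g q.1 + b * g r.1 :=
      hg.2 (Set.mem_univ _) (Set.mem_univ _) ha hb hab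
    have h2 : a * g q.1 + b * g r.1 < a * q.2 + b * r.2 := by
      rcases eq_or_lt_of_le ha with h | h
    
      · have hb1 : b = 1 := by linarith
        simp only [← h, hb1]
        simpa [hS] using hr
      · have : a * g q.1 < a * q.2 := by
          exact mul_lt_mul_of_pos_left hq h
        have : b * g r.1 ≤ b * r.2 := mul_le_mul_of_nonneg_left (le_of_lt hr) hb
        linarith [mul_lt_mul_of_pos_left (show g q.1 < q.2 from hq) h]
    exact lt_of_le_of_lt h1 h2
  have hx : (v0, g v0) ∉ S := by simp [hS]
  obtain ⟨L, hL⟩ := geometric_hahn_banach_open_point hconv hopen hx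
  set β : ℝ := L (0, 1) with hβdef
  have hdec : ∀ (v : E) (t : ℝ), L (v, t) = L (v, 0) + t * β := by
    intro v t
    have : (v, t) = (v, (0 : ℝ)) + t • ((0 : E), (1 : ℝ)) := by
      simp [Prod.ext_iff]
    rw [this, map_add, L.map_smul, smul_eq_mul, hβdef]
  have hβ : β < 0 := by
    have h1 : (v0, g v0 + 1) ∈ S := by simp [hS]
    have h2 := hL _ h1
    rw [hdec v0 (g v0 + 1), hdec v0 (g v0)] at h2
    nlinarith [h2]
  have key : ∀ v, L (v, 0) + g v * β ≤ L (v0, 0) + g v0 * β := by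
    intro v
    have hkey : ∀ ε > (0 : ℝ), L (v, 0) + g v * β ≤ L (v0, 0) + g v0 * β + ε := by
      intro ε hε
      have hδ : (0 : ℝ) < ε / (-β) := div_pos hε (by linarith)
      have h1 : (v, g v + ε / (-β)) ∈ S := by
        simp only [hS, Set.mem_setOf_eq]
        linarith
      have h2 := hL _ h1
      rw [hdec v (g v + ε / (-β)), hdec v0 (g v0)] at h2
      have hβne : β ≠ 0 := ne_of_lt hβ
      have h3 : (ε / (-β)) * β = -ε := by
        rw [div_neg, neg_mul, div_mul_cancel₀ _ hβne]
      nlinarith [h2, h3]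
    exact le_of_forall_pos_le_add hkey
  have hβne : β ≠ 0 := ne_of_lt hβ
  refine ⟨g v0 + β⁻¹ * L (v0, 0), -β⁻¹ • (L.comp (ContinuousLinearMap.inl ℝ E ℝ)), ?_, ?_⟩
  · intro v
    have h1 := key v
    have h2 : β⁻¹ * (L (v0, 0) + g v0 * β) ≤ β⁻¹ * (L (v, 0) + g v * β) :=
      mul_le_mul_of_nonpos_left h1 (le_of_lt (inv_neg''.mpr hβ))
    rw [mul_add, mul_add] at h2
    have e1 : β⁻¹ * (g v0 * β) = g v0 := by field_simp
    have e2 : β⁻¹ * (g v * β) = g v := by field_simp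
    simp only [ContinuousLinearMap.smul_apply, ContinuousLinearMap.comp_apply,
      ContinuousLinearMap.inl_apply, smul_eq_mul]
    linarith
  · simp only [ContinuousLinearMap.smul_apply, ContinuousLinearMap.comp_apply,
      ContinuousLinearMap.inl_apply, smul_eq_mul]
    ring

/-- Each coordinate of a Euclidean vector is bounded by its norm. -/
lemma abs_coord_le_norm {d : ℕ} (x : Esp d) (i : Fin d) : |x i| ≤ ‖x‖ := by
  rw [EuclideanSpace.norm_eq]
  have h1 : |x i| = Real.sqrt (|x i| ^ 2) := (Real.sqrt_sq (abs_nonneg _)).symm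
  rw [h1]
  apply Real.sqrt_le_sqrt
  rw [sq_abs]
  have : ∀ j ∈ Finset.univ, (0:ℝ) ≤ ‖x j‖ ^ 2 := fun j _ => sq_nonneg _
  calc x i ^ 2 = ‖x i‖ ^ 2 := by rw [Real.norm_eq_abs, sq_abs]
    _ ≤ ∑ j, ‖x j‖ ^ 2 := Finset.single_le_sum this (Finset.mem_univ i)

/-- Entries of `toMat G` are bounded by the operator norm of `G`. -/
lemma abs_toMat_le {d : ℕ} (G : Mat d) (i j : Fin d) : |toMat G i j| ≤ ‖G‖ := by
  have h1 : toMat G i j = (G ((stdBasis d) j)) i := by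
    rw [toMat, LinearMap.toMatrix_apply, stdBasis,
      OrthonormalBasis.coe_toBasis_repr_apply]
    rfl
  rw [h1]
  calc |(G ((stdBasis d) j)) i| ≤ ‖G ((stdBasis d) j)‖ := abs_coord_le_norm _ _
    _ ≤ ‖G‖ * ‖(stdBasis d) j‖ := G.le_opNorm _
    _ = ‖G‖ := by
        rw [stdBasis, OrthonormalBasis.coe_toBasis, EuclideanSpace.basisFun_apply,
          EuclideanSpace.norm_single, norm_one, mul_one]

/-- Bound on minors: `|m(G)_i| ≤ d! (‖G‖^p + 1)` when `p ≥ d`. -/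
lemma abs_minors_le {d : ℕ} {p : ℝ} (hp : (d : ℝ) ≤ p) (G : Mat d) (i : minorIdx d) :
    |minors G i| ≤ (d.factorial : ℝ) * (‖G‖ ^ p + 1) := by
  obtain ⟨k, r, c⟩ := i
  have hk : (k : ℕ) ≤ d := Nat.lt_succ_iff.mp k.2
  have hGnn : (0:ℝ) ≤ ‖G‖ := norm_nonneg _
  have hentry : ∀ a b : Fin (k : ℕ), |((toMat G).submatrix r c) a b| ≤ ‖G‖ := by
    intro a b; exact abs_toMat_le G _ _
  have hdet0 := Matrix.det_le (abv := (AbsoluteValue.abs : AbsoluteValue ℝ ℝ))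
    (A := (toMat G).submatrix r c) (x := ‖G‖) (fun a b => hentry a b)
  have hdet : |((toMat G).submatrix r c).det|
      ≤ Nat.factorial (Fintype.card (Fin (k:ℕ))) • ‖G‖ ^ (Fintype.card (Fin (k:ℕ))) := hdet0
  rw [Fintype.card_fin, nsmul_eq_mul] at hdet
  have hpow : ‖G‖ ^ (k : ℕ) ≤ ‖G‖ ^ p + 1 := by
    rcases le_or_gt ‖G‖ 1 with h | h
    · have h1 : ‖G‖ ^ (k : ℕ) ≤ 1 := pow_le_one₀ hGnn h
      have h2 : (0:ℝ) ≤ ‖G‖ ^ p := Real.rpow_nonneg hGnn p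
      linarith
    · have h1 : ‖G‖ ^ (k : ℕ) = ‖G‖ ^ ((k : ℕ) : ℝ) := (Real.rpow_natCast _ _).symm
      have h2 : ‖G‖ ^ ((k : ℕ) : ℝ) ≤ ‖G‖ ^ p := by
        apply Real.rpow_le_rpow_of_exponent_le (le_of_lt h)
        calc ((k:ℕ) : ℝ) ≤ (d : ℝ) := by exact_mod_cast hk
          _ ≤ p := hp
      rw [h1]
      linarith
  have hfact : ((k:ℕ).factorial : ℝ) ≤ (d.factorial : ℝ) := by
    exact_mod_cast Nat.factorial_le hk
  have hfac0 : (0:ℝ) ≤ ((k:ℕ).factorial : ℝ) := by positivity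
  have hpow0 : (0:ℝ) ≤ ‖G‖ ^ (k : ℕ) := by positivity
  calc |minors G ⟨k, r, c⟩| = |((toMat G).submatrix r c).det| := rfl
    _ ≤ ((k:ℕ).factorial : ℝ) * ‖G‖ ^ (k : ℕ) := hdet
    _ ≤ (d.factorial : ℝ) * (‖G‖ ^ p + 1) := by
        apply mul_le_mul hfact hpow hpow0 (by positivity)

/-- The zero function is polyconvex. -/
lemma polyconvexR_zero {d : ℕ} : PolyconvexR (fun _ : Mat d => (0:ℝ)) :=
  ⟨fun _ => 0, convexOn_const 0 convex_univ, fun _ => rfl⟩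

lemma polyEnv_bddAbove {d : ℕ} (V : Mat d → ℝ) (F : Mat d) :
    BddAbove {y | ∃ h : Mat d → ℝ, PolyconvexR h ∧ (∀ G, h G ≤ V G) ∧ y = h F} := by
  refine ⟨V F, ?_⟩
  rintro y ⟨h, _, hle, rfl⟩
  exact hle F

lemma polyEnv_nonempty {d : ℕ} (V : Mat d → ℝ) (hV : ∀ G, 0 ≤ V G) (F : Mat d) :
    Set.Nonempty {y | ∃ h : Mat d → ℝ, PolyconvexR h ∧ (∀ G, h G ≤ V G) ∧ y = h F} :=
  ⟨0, fun _ => 0, polyconvexR_zero, fun G => hV G, rfl⟩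

lemma polyEnv_le {d : ℕ} (V : Mat d → ℝ) (hV : ∀ G, 0 ≤ V G) (F : Mat d) :
    polyEnv V F ≤ V F := by
  apply csSup_le (polyEnv_nonempty V hV F)
  rintro y ⟨h, _, hle, rfl⟩
  exact hle F

lemma le_polyEnv {d : ℕ} (V : Mat d → ℝ) (h : Mat d → ℝ) (hpc : PolyconvexR h)
    (hle : ∀ G, h G ≤ V G) (F : Mat d) : h F ≤ polyEnv V F :=
  le_csSup (polyEnv_bddAbove V F) ⟨h, hpc, hle, rfl⟩

lemma polyEnv_mono {d : ℕ} (V₁ V₂ : Mat d → ℝ) (h1 : ∀ G, 0 ≤ V₁ G)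
    (hle : ∀ G, V₁ G ≤ V₂ G) (F : Mat d) : polyEnv V₁ F ≤ polyEnv V₂ F := by
  apply csSup_le_csSup (polyEnv_bddAbove V₂ F) (polyEnv_nonempty V₁ h1 F)
  rintro y ⟨h, hpc, hl, rfl⟩
  exact ⟨h, hpc, fun G => (hl G).trans (hle G), rfl⟩

/-- **Lemma (polyconvex envelopes of truncations).** Let `p ≥ d` and let `f` be a finite,
nonnegative polyconvex function. With `V_n(F) = min{f(F), n(|F|^p + 1)}` and `P V_n` the
polyconvex envelope of `V_n`, the sequence `(P V_n)_n` is nondecreasing and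
`sup_n P V_n(F) = f(F)` for all `F`. -/
theorem polyconvex_envelope_truncation (d : ℕ) (hd : 2 ≤ d) (p : ℝ) (hp : (d : ℝ) ≤ p)
    (f : Mat d → ℝ) (hf0 : ∀ F, 0 ≤ f F) (hf : PolyconvexR f) :
    (∀ F : Mat d,
      Monotone fun n : ℕ => polyEnv (fun G => min (f G) ((n : ℝ) * (‖G‖ ^ p + 1))) F) ∧
    (∀ F : Mat d,
      (⨆ n : ℕ, polyEnv (fun G => min (f G) ((n : ℝ) * (‖G‖ ^ p + 1))) F) = f F) := by
  set V : ℕ → Mat d → ℝ := fun n G => min (f G) ((n : ℝ) * (‖G‖ ^ p + 1)) with hV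
  have hVnn : ∀ n G, 0 ≤ V n G := by
    intro n G
    apply le_min (hf0 G)
    have : (0:ℝ) ≤ ‖G‖ ^ p := Real.rpow_nonneg (norm_nonneg _) p
    positivity
  have hVmono : ∀ {n m : ℕ}, n ≤ m → ∀ G, V n G ≤ V m G := by
    intro n m hnm G
    apply min_le_min le_rfl
    have h1 : (0:ℝ) ≤ ‖G‖ ^ p + 1 := by
      have : (0:ℝ) ≤ ‖G‖ ^ p := Real.rpow_nonneg (norm_nonneg _) p
      linarith
    apply mul_le_mul_of_nonneg_right _ h1
    exact_mod_cast hnm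
  have hVle : ∀ n G, V n G ≤ f G := fun n G => min_le_left _ _
  have hmono : ∀ F : Mat d, Monotone fun n : ℕ => polyEnv (V n) F := by
    intro F n m hnm
    exact polyEnv_mono (V n) (V m) (hVnn n) (hVmono hnm) F
  refine ⟨hmono, ?_⟩
  intro F
  -- upper bound of each term
  have hub : ∀ n, polyEnv (V n) F ≤ f F := fun n =>
    (polyEnv_le (V n) (hVnn n) F).trans (hVle n F)
  -- lower bound: build an affine minorant of f touching at F
  obtain ⟨g, hgconv, hgf⟩ := hf
  obtain ⟨c, A, hAle, hAeq⟩ := exists_affine_minorant hgconv (minors F)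
  set h : Mat d → ℝ := fun G => c + A (minors G) with hh
  have hpc : PolyconvexR h := by
    refine ⟨fun v => c + A v, ?_, fun _ => rfl⟩
    refine ⟨convex_univ, ?_⟩
    intro x _ y _ a b ha hb hab
    have e : A (a • x + b • y) = a * A x + b * A y := by
      rw [map_add, A.map_smul, A.map_smul, smul_eq_mul, smul_eq_mul]
    have e2 : a * c + b * c = c := by rw [← add_mul, hab, one_mul]
    simp only [smul_eq_mul, e]
    linarith [e2]
  have hhf : ∀ G, h G ≤ f G := fun G => by rw [hh, hgf G]; exact hAle (minors G)
  have hhF : h F = f F := by rw [hh, hgf F]; exact hAeq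
  -- growth bound on h
  set C : ℝ := |c| + ‖A‖ * (d.factorial : ℝ) with hC
  have hCnn : 0 ≤ C := by positivity
  set n0 : ℕ := ⌈C⌉₊ with hn0
  have hgrowth : ∀ G, h G ≤ (n0 : ℝ) * (‖G‖ ^ p + 1) := by
    intro G
    have hone : (1:ℝ) ≤ ‖G‖ ^ p + 1 := by
      have : (0:ℝ) ≤ ‖G‖ ^ p := Real.rpow_nonneg (norm_nonneg _) p
      linarith
    have hnorm : ‖minors G‖ ≤ (d.factorial : ℝ) * (‖G‖ ^ p + 1) := by
      apply pi_norm_le_iff_of_nonneg (by positivity) |>.mpr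
      intro i
      rw [Real.norm_eq_abs]
      exact abs_minors_le hp G i
    have h1 : A (minors G) ≤ ‖A‖ * ((d.factorial : ℝ) * (‖G‖ ^ p + 1)) := by
      calc A (minors G) ≤ |A (minors G)| := le_abs_self _
        _ = ‖A (minors G)‖ := (Real.norm_eq_abs _).symm
        _ ≤ ‖A‖ * ‖minors G‖ := A.le_opNorm _
        _ ≤ ‖A‖ * ((d.factorial : ℝ) * (‖G‖ ^ p + 1)) :=
            mul_le_mul_of_nonneg_left hnorm (norm_nonneg _)
    have h2 : c ≤ |c| * (‖G‖ ^ p + 1) := by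
      calc c ≤ |c| := le_abs_self _
        _ = |c| * 1 := (mul_one _).symm
        _ ≤ |c| * (‖G‖ ^ p + 1) := mul_le_mul_of_nonneg_left hone (abs_nonneg _)
    have h3 : C ≤ (n0 : ℝ) := Nat.le_ceil C
    have h4 : C * (‖G‖ ^ p + 1) ≤ (n0 : ℝ) * (‖G‖ ^ p + 1) :=
      mul_le_mul_of_nonneg_right h3 (by linarith)
    rw [hh]
    simp only []
    rw [hC] at h4
    nlinarith [h1, h2]
  have hhV : ∀ G, h G ≤ V n0 G := fun G => le_min (hhf G) (hgrowth G)
  have hlb : f F ≤ polyEnv (V n0) F := by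
    rw [← hhF]
    exact le_polyEnv (V n0) h hpc hhV F
  -- conclude
  apply le_antisymm
  · exact ciSup_le hub
  · calc f F ≤ polyEnv (V n0) F := hlb
      _ ≤ ⨆ n : ℕ, polyEnv (V n) F := le_ciSup ⟨f F, by rintro y ⟨n, rfl⟩; exact hub n⟩ n0

end
end
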